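/- arXiv:2402.01589 — 6 statements merged into one kernel-verified Lean document; each statement's English description precedes it below -/
import Mathlib

section
/- Let P be an ipomset whose precedence order < is an interval order. Then the relation ≺ on maximal <-antichains of P, defined by U ≺ T iff U ≠ T and for all u ∈ U, t ∈ T we have ¬(t < u), is a strict linear order. -/
/-- `Q` is an antichain for the strict order `lt`. -/
def IsLtAntichain {P : Type} (lt : P → P → Prop) (Q : Set P) : Prop :=
  ∀ x ∈ Q, ∀ y ∈ Q, x ≠ y → ¬ lt x y ∧ ¬ lt y x

/-- `Q` is a maximal antichain for `lt`. -/
def IsLtMaxAntichain {P : Type} (lt : P → P → Prop) (Q : Set P) : Prop :=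
  IsLtAntichain lt Q ∧ ∀ R : Set P, IsLtAntichain lt R → Q ⊆ R → Q = R

/-- The order `≺` on (maximal) antichains: `U ≺ T` iff `U ≠ T` and no element
of `T` lies below any element of `U`. -/
def achPrec {P : Type} (lt : P → P → Prop) (U T : Set P) : Prop :=
  U ≠ T ∧ ∀ u ∈ U, ∀ t ∈ T, ¬ lt t u

/-!
The relation `≺` is irreflexive by definition. If `U ≺ V ≺ U`, no element of one
antichain is comparable to an element of the other, so `U ∪ V` is an antichain and
maximality forces `U = V`. For transitivity, suppose `w < u` with `w ∈ W`, `u ∈ U`: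
either `w ∈ V`, or by maximality of `V` some `v ∈ V` is comparable to `w`; then
`v < w < u` contradicts `U ≺ V` and `w < v` contradicts `V ≺ W`.
For linearity, if neither `U ≺ V` nor `V ≺ U` then `v < u` and `u' < v'` for some
`u, u' ∈ U` and `v, v' ∈ V`, and the interval condition yields `v < v'` or `u' < u`,
which is impossible inside an antichain.
-/

section Antichain

variable {P : Type} {lt : P → P → Prop} {U V : Set P}

theorem isLtAntichain_singleton (lt : P → P → Prop) (w : P) : IsLtAntichain lt {w} := by
  rintro x rfl y rfl hxy
  exact absurd rfl hxy

theorem IsLtAntichain.union (hU : IsLtAntichain lt U) (hV : IsLtAntichain lt V)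
    (hUV : ∀ u ∈ U, ∀ v ∈ V, ¬ lt u v ∧ ¬ lt v u) : IsLtAntichain lt (U ∪ V) := by
  rintro x (hx | hx) y (hy | hy) hxy
  · exact hU x hx y hy hxy
  · exact hUV x hx y hy
  · exact (hUV y hy x hx).symm
  · exact hV x hx y hy hxy

theorem IsLtMaxAntichain.subset_of_union (hU : IsLtMaxAntichain lt U)
    (hUV : IsLtAntichain lt (U ∪ V)) : V ⊆ U :=
  (hU.2 _ hUV Set.subset_union_left).symm ▸ Set.subset_union_right

theorem IsLtMaxAntichain.exists_lt_or_lt_of_notMem (hV : IsLtMaxAntichain lt V) {w : P}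
    (hw : w ∉ V) : ∃ v ∈ V, lt v w ∨ lt w v := by
  by_contra! hcomp
  have hunion : IsLtAntichain lt (V ∪ {w}) :=
    hV.1.union (isLtAntichain_singleton lt w) <| by
      rintro v hv _ rfl
      exact hcomp v hv
  exact hw (hV.subset_of_union hunion rfl)

end Antichain

section AchPrec

variable {P : Type} {lt : P → P → Prop} {U V W : Set P}

theorem achPrec_irrefl (lt : P → P → Prop) (U : Set P) : ¬ achPrec lt U U :=
  fun h => h.1 rfl

theorem achPrec_asymm (hU : IsLtMaxAntichain lt U) (hV : IsLtMaxAntichain lt V)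
    (hUV : achPrec lt U V) (hVU : achPrec lt V U) : False := by
  have hunion : IsLtAntichain lt (U ∪ V) :=
    hU.1.union hV.1 fun u hu v hv => ⟨hVU.2 v hv u hu, hUV.2 u hu v hv⟩
  exact hUV.1 (Set.Subset.antisymm (hV.subset_of_union (Set.union_comm U V ▸ hunion))
    (hU.subset_of_union hunion))

theorem achPrec_trans (hlt_tr : ∀ x y z, lt x y → lt y z → lt x z)
    (hU : IsLtMaxAntichain lt U) (hV : IsLtMaxAntichain lt V)
    (hUV : achPrec lt U V) (hVW : achPrec lt V W) : achPrec lt U W := by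
  refine ⟨?_, fun u hu w hw hwu => ?_⟩
  · rintro rfl
    exact achPrec_asymm hU hV hUV hVW
  by_cases hwV : w ∈ V
  · exact hUV.2 u hu w hwV hwu
  obtain ⟨v, hv, hvw | hwv⟩ := hV.exists_lt_or_lt_of_notMem hwV
  · exact hUV.2 u hu v hv (hlt_tr v w u hvw hwu)
  · exact hVW.2 v hv w hw hwv

theorem IsLtAntichain.not_lt (hlt_irr : ∀ x, ¬ lt x x) (hU : IsLtAntichain lt U)
    {x y : P} (hx : x ∈ U) (hy : y ∈ U) : ¬ lt x y := by
  rcases eq_or_ne x y with rfl | hxy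
  · exact hlt_irr x
  · exact (hU x hx y hy hxy).1

theorem achPrec_trichotomous (hlt_irr : ∀ x, ¬ lt x x)
    (hinterval : ∀ x y z w, lt x z → lt y w → lt x w ∨ lt y z)
    (hU : IsLtAntichain lt U) (hV : IsLtAntichain lt V) :
    U = V ∨ achPrec lt U V ∨ achPrec lt V U := by
  by_contra! h
  obtain ⟨hUV, hnUV, hnVU⟩ := h
  simp only [achPrec, not_and, not_forall, not_not] at hnUV hnVU
  obtain ⟨u, hu, v, hv, hvu⟩ := hnUV hUV
  obtain ⟨v', hv', u', hu', hu'v'⟩ := hnVU (Ne.symm hUV)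
  rcases hinterval v u' u v' hvu hu'v' with hvv' | hu'u
  · exact hV.not_lt hlt_irr hv hv' hvv'
  · exact hU.not_lt hlt_irr hu' hu hu'u

end AchPrec

theorem achPrec_strict_linear_order_of_interval_general
    {P : Type}
    (lt : P → P → Prop)
    (hlt_irr : ∀ x, ¬ lt x x) (hlt_tr : ∀ x y z, lt x y → lt y z → lt x z)
    (hinterval : ∀ x y z w, lt x z → lt y w → lt x w ∨ lt y z) :
    (∀ U, IsLtMaxAntichain lt U → ¬ achPrec lt U U) ∧
    (∀ U V W, IsLtMaxAntichain lt U → IsLtMaxAntichain lt V → IsLtMaxAntichain lt W →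
      achPrec lt U V → achPrec lt V W → achPrec lt U W) ∧
    (∀ U V, IsLtMaxAntichain lt U → IsLtMaxAntichain lt V →
      U = V ∨ achPrec lt U V ∨ achPrec lt V U) :=
  ⟨fun U _ => achPrec_irrefl lt U,
    fun _ _ _ hU hV _ => achPrec_trans hlt_tr hU hV,
    fun _ _ hU hV => achPrec_trichotomous hlt_irr hinterval hU.1 hV.1⟩

/-- Let `P` be an ipomset whose precedence order `<` is an interval
order.  Then the relation `≺` on maximal `<`-antichains of `P` is a strict linear
order (irreflexive, transitive, and trichotomous on maximal antichains). -/
theorem achPrec_strict_linear_order_of_interval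
    {L P : Type} [Finite P]
    (lt eo : P → P → Prop) (lab : P → L) (S T : Set P)
    (hlt_irr : ∀ x, ¬ lt x x) (hlt_tr : ∀ x y z, lt x y → lt y z → lt x z)
    (heo_irr : ∀ x, ¬ eo x x) (heo_tr : ∀ x y z, eo x y → eo y z → eo x z)
    (htot : ∀ x y : P, x ≠ y → lt x y ∨ lt y x ∨ eo x y ∨ eo y x)
    (hS : ∀ x ∈ S, ∀ y, ¬ lt y x) (hT : ∀ x ∈ T, ∀ y, ¬ lt x y)
    (hinterval : ∀ x y z w, lt x z → lt y w → lt x w ∨ lt y z) :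
    (∀ U, IsLtMaxAntichain lt U → ¬ achPrec lt U U) ∧
    (∀ U V W, IsLtMaxAntichain lt U → IsLtMaxAntichain lt V → IsLtMaxAntichain lt W →
      achPrec lt U V → achPrec lt V W → achPrec lt U W) ∧
    (∀ U V, IsLtMaxAntichain lt U → IsLtMaxAntichain lt V →
      U = V ∨ achPrec lt U V ∨ achPrec lt V U) :=
  achPrec_strict_linear_order_of_interval_general lt hlt_irr hlt_tr hinterval
end

section
/- The gluing composition of ipomsets is well-defined: if P and Q are ipomsets with T_P isomorphic to S_Q via the unique isomorphism f, then P * Q, with underlying set (P ⊔ Q) quotiented by x ≃ f(x), precedence order <_P ∪ <_Q ∪ (P∖T_P)×(Q∖S_Q), event order the transitive closure of ⇢_P ∪ ⇢_Q, interfaces S_P and T_Q, is again an ipomset (the precedence relation is a strict partial order and its union with the event order is total). -/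
attribute [local instance] Classical.propDecidable

/-- The three possible states of an event. -/
inductive Tri
  | zero | ex | one

/-- A pre-ipomset: the raw data of a labelled partially ordered multiset
with interfaces over the alphabet `L`. -/
structure PreIpomset (L : Type) where
  car : Type
  lt : car → car → Prop
  eo : car → car → Prop
  lab : car → L
  S : Set car
  T : Set car

/-- `P` is an ipomset: the carrier is finite, `lt` (precedence) and `eo` (event
order) are strict partial orders whose union is total, the source interface
consists of `lt`-minimal elements and the target interface of `lt`-maximal ones. -/
def IsIpomset {L : Type} (P : PreIpomset L) : Prop :=
  Finite P.car ∧
  (∀ x, ¬ P.lt x x) ∧ (∀ x y z, P.lt x y → P.lt y z → P.lt x z) ∧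
  (∀ x, ¬ P.eo x x) ∧ (∀ x y z, P.eo x y → P.eo y z → P.eo x z) ∧
  (∀ x y, x ≠ y → P.lt x y ∨ P.lt y x ∨ P.eo x y ∨ P.eo y x) ∧
  (∀ x ∈ P.S, ∀ y, ¬ P.lt y x) ∧ (∀ x ∈ P.T, ∀ y, ¬ P.lt x y)

/-- `P` is an interval ipomset: the precedence order is an interval order. -/
def IsInterval {L : Type} (P : PreIpomset L) : Prop :=
  ∀ x y z w, P.lt x z → P.lt y w → P.lt x w ∨ P.lt y z

/-- `P` is discrete: the precedence order is empty. -/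
def IsDiscreteIpomset {L : Type} (P : PreIpomset L) : Prop := ∀ x y, ¬ P.lt x y

/-- The canonical inclusion of `Q` into the gluing `P * Q` (whose carrier is
modelled as `P.car ⊕ {q : Q.car // q ∉ Q.S}`): elements of `S_Q` are identified
with elements of `T_P` via the interface isomorphism `f`. -/
noncomputable def iotaQ {L : Type} (P Q : PreIpomset L)
    (f : {x : P.car // x ∈ P.T} ≃ {y : Q.car // y ∈ Q.S}) :
    Q.car → P.car ⊕ {q : Q.car // q ∉ Q.S} :=
  fun q => if h : q ∈ Q.S then Sum.inl (f.symm ⟨q, h⟩).1 else Sum.inr ⟨q, h⟩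

/-- The gluing composition `P * Q` of pre-ipomsets along the interface
isomorphism `f : T_P ≃ S_Q`.  The precedence order is
`<_P ∪ <_Q ∪ (P ∖ T_P) × (Q ∖ S_Q)`, the event order is the transitive closure
of `⇢_P ∪ ⇢_Q`, the source interface is `S_P` and the target interface `T_Q`. -/
noncomputable def glue {L : Type} (P Q : PreIpomset L)
    (f : {x : P.car // x ∈ P.T} ≃ {y : Q.car // y ∈ Q.S}) : PreIpomset L where
  car := P.car ⊕ {q : Q.car // q ∉ Q.S}
  lt := fun x y =>
    (∃ a b, x = Sum.inl a ∧ y = Sum.inl b ∧ P.lt a b) ∨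
    (∃ a b, x = iotaQ P Q f a ∧ y = iotaQ P Q f b ∧ Q.lt a b) ∨
    (∃ a b, x = Sum.inl a ∧ y = iotaQ P Q f b ∧ a ∉ P.T ∧ b ∉ Q.S)
  eo := Relation.TransGen (fun x y =>
    (∃ a b, x = Sum.inl a ∧ y = Sum.inl b ∧ P.eo a b) ∨
    (∃ a b, x = iotaQ P Q f a ∧ y = iotaQ P Q f b ∧ Q.eo a b))
  lab := fun x => match x with
    | Sum.inl a => P.lab a
    | Sum.inr q => Q.lab q.1
  S := Sum.inl '' P.S
  T := (iotaQ P Q f) '' Q.T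

/-- The interface isomorphism `f : T_P ≃ S_Q` is a conclist isomorphism:
it preserves the event order and the labels. -/
def GlueOK {L : Type} (P Q : PreIpomset L)
    (f : {x : P.car // x ∈ P.T} ≃ {y : Q.car // y ∈ Q.S}) : Prop :=
  (∀ a b : {x : P.car // x ∈ P.T}, P.eo a.1 b.1 ↔ Q.eo (f a).1 (f b).1) ∧
  (∀ a : {x : P.car // x ∈ P.T}, Q.lab (f a).1 = P.lab a.1)

/-- Isomorphism of pre-ipomsets: a bijection preserving precedence, event order,
labels and both interfaces. -/
def IpomIso {L : Type} (A B : PreIpomset L) : Prop :=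
  ∃ e : A.car ≃ B.car,
    (∀ x y, A.lt x y ↔ B.lt (e x) (e y)) ∧
    (∀ x y, A.eo x y ↔ B.eo (e x) (e y)) ∧
    (∀ x, B.lab (e x) = A.lab x) ∧
    (e '' A.S = B.S) ∧ (e '' A.T = B.T)


/-!
View `P` and `Q` as the subsets `range Sum.inl` and `range (iotaQ P Q f)` of the glued carrier,
overlapping exactly in the interface `T_P = S_Q`. Interface events are `<_P`-maximal and
`<_Q`-minimal, so a precedence chain can pass from `P` to `Q` only through the mixed part
`(P ∖ T_P) × (Q ∖ S_Q)` and never back; this gives a strict order. Since `f` is an isomorphism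
of conclists, `⇢_P` and `⇢_Q` agree on the interface, so every path of `⇢_P ∪ ⇢_Q` can be
shortened to one that switches sides at most once, and a cycle would yield a cycle of `⇢_P`.
Two distinct events lie together in `P`, together in `Q`, or on opposite sides of the
interface, where the mixed precedence relates them; hence totality.
-/

open Function Set Relation

namespace Relation

variable {α β : Type*}

lemma map_iff_exists_eq {r : α → α → Prop} {f : α → β} {x y : β} :
    Relation.Map r f f x y ↔ ∃ a b, x = f a ∧ y = f b ∧ r a b := by
  simp only [Relation.Map]
  grind

structure IsStrictOrderIn (r : α → α → Prop) (A : Set α) : Prop where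
  irrefl : ∀ x, ¬ r x x
  trans : ∀ ⦃x y z⦄, r x y → r y z → r x z
  mem : ∀ ⦃x y⦄, r x y → x ∈ A ∧ y ∈ A

section Map

variable {r e : α → α → Prop} {f : α → β}

lemma isStrictOrderIn_map (hf : Injective f) (hirr : ∀ a, ¬ r a a)
    (htrans : ∀ a b c, r a b → r b c → r a c) :
    IsStrictOrderIn (Relation.Map r f f) (range f) where
  irrefl := by
    rintro _ ⟨a, b, hab, rfl, hba⟩
    exact hirr a (hf hba ▸ hab)
  trans := by
    rintro _ _ _ ⟨a, b, hab, rfl, rfl⟩ ⟨b', c, hbc, hb, rfl⟩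
    exact ⟨a, c, htrans a b c hab (hf hb ▸ hbc), rfl, rfl⟩
  mem := by
    rintro _ _ ⟨a, b, -, rfl, rfl⟩
    exact ⟨mem_range_self a, mem_range_self b⟩

lemma not_map_apply_right (hf : Injective f) {a : α} (ha : ∀ b, ¬ r b a) (y : β) :
    ¬ Relation.Map r f f y (f a) := by
  rintro ⟨b, a', hba, -, ha'⟩
  exact ha b (hf ha' ▸ hba)

lemma not_map_apply_left (hf : Injective f) {a : α} (ha : ∀ b, ¬ r a b) (y : β) :
    ¬ Relation.Map r f f (f a) y := by
  rintro ⟨a', b, hab, ha', -⟩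
  exact ha b (hf ha' ▸ hab)

lemma map_total_on_range {e' : β → β → Prop}
    (htot : ∀ a b, a ≠ b → r a b ∨ r b a ∨ e a b ∨ e b a)
    (he : ∀ a b, e a b → e' (f a) (f b)) :
    ∀ x ∈ range f, ∀ y ∈ range f, x ≠ y →
      Relation.Map r f f x y ∨ Relation.Map r f f y x ∨ e' x y ∨ e' y x := by
  rintro _ ⟨a, rfl⟩ _ ⟨b, rfl⟩ hne
  rcases htot a b (ne_of_apply_ne f hne) with h | h | h | h
  · exact Or.inl ⟨a, b, h, rfl, rfl⟩
  · exact Or.inr (Or.inl ⟨b, a, h, rfl, rfl⟩)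
  · exact Or.inr (Or.inr (Or.inl (he a b h)))
  · exact Or.inr (Or.inr (Or.inr (he b a h)))

end Map

section SeqUnion

variable {A B : Set α} {r s : α → α → Prop}

/-- The precedence `<_P ∪ <_Q ∪ (P ∖ T_P) × (Q ∖ S_Q)` of a gluing, with `P` and `Q` seen as
subsets `A` and `B` of the glued carrier. -/
def SeqUnion (A B : Set α) (r s : α → α → Prop) (x y : α) : Prop :=
  r x y ∨ s x y ∨ (x ∈ A \ B ∧ y ∈ B \ A)

lemma seqUnion_irrefl (hr : ∀ x, ¬ r x x) (hs : ∀ x, ¬ s x x) (x : α) :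
    ¬ SeqUnion A B r s x x := by
  rintro (h | h | ⟨hx, hx'⟩)
  exacts [hr x h, hs x h, hx.2 hx'.1]

lemma seqUnion_trans (hr : IsStrictOrderIn r A) (hs : IsStrictOrderIn s B)
    (hrB : ∀ x y, r x y → x ∉ B) (hsA : ∀ x y, s x y → y ∉ A) {x y z : α} :
    SeqUnion A B r s x y → SeqUnion A B r s y z → SeqUnion A B r s x z := by
  rintro (hxy | hxy | ⟨hx, hy⟩) (hyz | hyz | ⟨hy', hz⟩)
  · exact Or.inl (hr.trans hxy hyz)
  · exact Or.inr (Or.inr ⟨⟨(hr.mem hxy).1, hrB _ _ hxy⟩, (hs.mem hyz).2, hsA _ _ hyz⟩)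
  · exact Or.inr (Or.inr ⟨⟨(hr.mem hxy).1, hrB _ _ hxy⟩, hz⟩)
  · exact absurd (hr.mem hyz).1 (hsA _ _ hxy)
  · exact Or.inr (Or.inl (hs.trans hxy hyz))
  · exact absurd hy'.1 (hsA _ _ hxy)
  · exact absurd (hr.mem hyz).1 hy.2
  · exact Or.inr (Or.inr ⟨hx, (hs.mem hyz).2, hsA _ _ hyz⟩)
  · exact absurd hy'.1 hy.2

lemma not_seqUnion_of_minimal (hsA : ∀ x y, s x y → y ∉ A)
    {x : α} (hxA : x ∈ A) (hx : ∀ y, ¬ r y x) (y : α) : ¬ SeqUnion A B r s y x := by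
  rintro (h | h | ⟨-, hx'⟩)
  exacts [hx y h, hsA _ _ h hxA, hx'.2 hxA]

lemma not_seqUnion_of_maximal (hrB : ∀ x y, r x y → x ∉ B)
    {x : α} (hxB : x ∈ B) (hx : ∀ y, ¬ s x y) (y : α) : ¬ SeqUnion A B r s x y := by
  rintro (h | h | ⟨hx', -⟩)
  exacts [hrB _ _ h hxB, hx y h, hx'.2 hxB]

lemma seqUnion_total {e : α → α → Prop} (hcover : ∀ x, x ∈ A ∨ x ∈ B)
    (hA : ∀ x ∈ A, ∀ y ∈ A, x ≠ y → r x y ∨ r y x ∨ e x y ∨ e y x)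
    (hB : ∀ x ∈ B, ∀ y ∈ B, x ≠ y → s x y ∨ s y x ∨ e x y ∨ e y x) {x y : α} (hne : x ≠ y) :
    SeqUnion A B r s x y ∨ SeqUnion A B r s y x ∨ e x y ∨ e y x := by
  have hA' := fun hx hy => hA x hx y hy hne
  have hB' := fun hx hy => hB x hx y hy hne
  have := hcover x; have := hcover y
  simp only [SeqUnion, mem_sdiff]
  tauto

end SeqUnion

section OneSwitch

variable {A B : Set α} {e₁ e₂ : α → α → Prop}

/-- When `e₂` agrees with `e₁` on `A`, every path of `e₁ ∪ e₂` shortens to one of this form: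
an `e₁ e₂ e₁` detour passes through `A` and so collapses to a single `e₁` step. -/
def OneSwitch (e₁ e₂ : α → α → Prop) (x y : α) : Prop :=
  e₁ x y ∨ e₂ x y ∨ Relation.Comp e₁ e₂ x y ∨ Relation.Comp e₂ e₁ x y

lemma oneSwitch_comm {x y : α} : OneSwitch e₁ e₂ x y ↔ OneSwitch e₂ e₁ x y := by
  unfold OneSwitch
  tauto

lemma OneSwitch.tail (h₁ : IsStrictOrderIn e₁ A) (h₂₁ : ∀ x ∈ A, ∀ y ∈ A, e₂ x y → e₁ x y)
    {x y z : α} (hxy : OneSwitch e₁ e₂ x y) (hyz : e₁ y z) : OneSwitch e₁ e₂ x z := by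
  rcases hxy with hxy | hxy | ⟨t, hxt, hty⟩ | ⟨t, hxt, hty⟩
  · exact Or.inl (h₁.trans hxy hyz)
  · exact Or.inr (Or.inr (Or.inr ⟨y, hxy, hyz⟩))
  · have hty' : e₁ t y := h₂₁ t (h₁.mem hxt).2 y (h₁.mem hyz).1 hty
    exact Or.inl (h₁.trans hxt (h₁.trans hty' hyz))
  · exact Or.inr (Or.inr (Or.inr ⟨t, hxt, h₁.trans hty hyz⟩))

lemma oneSwitch_of_transGen (h₁ : IsStrictOrderIn e₁ A) (h₂ : IsStrictOrderIn e₂ B)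
    (h₂₁ : ∀ x ∈ A, ∀ y ∈ A, e₂ x y → e₁ x y) (h₁₂ : ∀ x ∈ B, ∀ y ∈ B, e₁ x y → e₂ x y)
    {x y : α} (h : TransGen (fun x y => e₁ x y ∨ e₂ x y) x y) : OneSwitch e₁ e₂ x y := by
  induction h with
  | single h => exact h.elim Or.inl (Or.inr ∘ Or.inl)
  | tail _ hstep ih =>
    rcases hstep with hstep | hstep
    · exact ih.tail h₁ h₂₁ hstep
    · exact oneSwitch_comm.2 ((oneSwitch_comm.1 ih).tail h₂ h₁₂ hstep)

lemma not_oneSwitch_self (h₁ : IsStrictOrderIn e₁ A) (h₂ : IsStrictOrderIn e₂ B)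
    (h₂₁ : ∀ x ∈ A, ∀ y ∈ A, e₂ x y → e₁ x y) (x : α) : ¬ OneSwitch e₁ e₂ x x := by
  rintro (h | h | ⟨t, hxt, htx⟩ | ⟨t, hxt, htx⟩)
  · exact h₁.irrefl x h
  · exact h₂.irrefl x h
  · exact h₁.irrefl x (h₁.trans hxt (h₂₁ t (h₁.mem hxt).2 x (h₁.mem hxt).1 htx))
  · exact h₁.irrefl x (h₁.trans (h₂₁ x (h₁.mem htx).2 t (h₁.mem htx).1 hxt) htx)

lemma transGen_sup_irrefl (h₁ : IsStrictOrderIn e₁ A) (h₂ : IsStrictOrderIn e₂ B)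
    (h₂₁ : ∀ x ∈ A, ∀ y ∈ A, e₂ x y → e₁ x y) (h₁₂ : ∀ x ∈ B, ∀ y ∈ B, e₁ x y → e₂ x y)
    (x : α) : ¬ TransGen (fun x y => e₁ x y ∨ e₂ x y) x x :=
  fun h => not_oneSwitch_self h₁ h₂ h₂₁ x (oneSwitch_of_transGen h₁ h₂ h₂₁ h₁₂ h)

end OneSwitch

end Relation

section Glue

variable {L : Type} {P Q : PreIpomset L} {f : {x : P.car // x ∈ P.T} ≃ {y : Q.car // y ∈ Q.S}}

lemma iotaQ_apply_coe (t : {x : P.car // x ∈ P.T}) : iotaQ P Q f (f t) = Sum.inl t.1 := by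
  simp [iotaQ]

lemma inl_eq_iotaQ_iff {a : P.car} {q : Q.car} :
    Sum.inl a = iotaQ P Q f q ↔ ∃ t : {x : P.car // x ∈ P.T}, t.1 = a ∧ (f t).1 = q := by
  constructor
  · unfold iotaQ
    split_ifs with hq
    · intro h
      exact ⟨f.symm ⟨q, hq⟩, (Sum.inl.inj h).symm, by simp⟩
    · simp
  · rintro ⟨t, rfl, rfl⟩
    exact (iotaQ_apply_coe t).symm

lemma iotaQ_injective : Injective (iotaQ P Q f) := by
  intro a b hab
  by_cases ha : a ∈ Q.S <;> by_cases hb : b ∈ Q.S <;> simp [iotaQ, ha, hb] at hab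
  · simpa using congrArg f (Subtype.ext hab)
  · exact hab

lemma inl_mem_range_iotaQ_iff {a : P.car} : Sum.inl a ∈ range (iotaQ P Q f) ↔ a ∈ P.T := by
  simp only [mem_range, eq_comm (b := Sum.inl a), inl_eq_iotaQ_iff]
  exact ⟨fun ⟨_, t, ht, _⟩ => ht ▸ t.2, fun ha => ⟨_, ⟨a, ha⟩, rfl, rfl⟩⟩

lemma iotaQ_mem_range_inl_iff {q : Q.car} : iotaQ P Q f q ∈ range Sum.inl ↔ q ∈ Q.S := by
  simp only [mem_range, inl_eq_iotaQ_iff]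
  exact ⟨fun ⟨_, t, _, ht⟩ => ht ▸ (f t).2, fun hq => ⟨_, f.symm ⟨q, hq⟩, rfl, by simp⟩⟩

lemma mem_range_inl_or_mem_range_iotaQ (x : P.car ⊕ {q : Q.car // q ∉ Q.S}) :
    x ∈ range Sum.inl ∨ x ∈ range (iotaQ P Q f) := by
  rcases x with a | ⟨q, hq⟩
  · exact Or.inl (mem_range_self a)
  · exact Or.inr ⟨q, by simp [iotaQ, hq]⟩

lemma glue_lt_iff {x y : P.car ⊕ {q : Q.car // q ∉ Q.S}} :
    (glue P Q f).lt x y ↔ SeqUnion (range Sum.inl) (range (iotaQ P Q f))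
      (Relation.Map P.lt Sum.inl Sum.inl) (Relation.Map Q.lt (iotaQ P Q f) (iotaQ P Q f)) x y := by
  simp only [glue, SeqUnion, map_iff_exists_eq]
  refine or_congr_right (or_congr_right ⟨?_, ?_⟩)
  · rintro ⟨a, b, rfl, rfl, ha, hb⟩
    exact ⟨⟨mem_range_self a, mt inl_mem_range_iotaQ_iff.1 ha⟩,
      mem_range_self b, mt iotaQ_mem_range_inl_iff.1 hb⟩
  · rintro ⟨⟨⟨a, rfl⟩, ha⟩, ⟨b, rfl⟩, hb⟩
    exact ⟨a, b, rfl, rfl, mt inl_mem_range_iotaQ_iff.2 ha, mt iotaQ_mem_range_inl_iff.2 hb⟩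

lemma glue_eo_iff {x y : P.car ⊕ {q : Q.car // q ∉ Q.S}} :
    (glue P Q f).eo x y ↔ TransGen (fun x y => Relation.Map P.eo Sum.inl Sum.inl x y ∨
      Relation.Map Q.eo (iotaQ P Q f) (iotaQ P Q f) x y) x y := by
  simp only [glue, map_iff_exists_eq]

lemma map_eo_iotaQ_imp_map_eo_inl (hf : GlueOK P Q f) :
    ∀ x ∈ range Sum.inl, ∀ y ∈ range Sum.inl,
      Relation.Map Q.eo (iotaQ P Q f) (iotaQ P Q f) x y →
        Relation.Map P.eo Sum.inl Sum.inl x y := by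
  rintro _ ⟨a, rfl⟩ _ ⟨b, rfl⟩ ⟨a', b', h, ha, hb⟩
  obtain ⟨t, rfl, rfl⟩ := inl_eq_iotaQ_iff.1 ha.symm
  obtain ⟨t', rfl, rfl⟩ := inl_eq_iotaQ_iff.1 hb.symm
  exact ⟨t, t', (hf.1 t t').2 h, rfl, rfl⟩

lemma map_eo_inl_imp_map_eo_iotaQ (hf : GlueOK P Q f) :
    ∀ x ∈ range (iotaQ P Q f), ∀ y ∈ range (iotaQ P Q f),
      Relation.Map P.eo Sum.inl Sum.inl x y →
        Relation.Map Q.eo (iotaQ P Q f) (iotaQ P Q f) x y := by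
  rintro _ ⟨a, rfl⟩ _ ⟨b, rfl⟩ ⟨a', b', h, ha, hb⟩
  obtain ⟨t, rfl, rfl⟩ := inl_eq_iotaQ_iff.1 ha
  obtain ⟨t', rfl, rfl⟩ := inl_eq_iotaQ_iff.1 hb
  exact ⟨f t, f t', (hf.1 t t').1 h, rfl, rfl⟩

lemma not_mem_range_iotaQ_of_map_lt (hPmax : ∀ x ∈ P.T, ∀ y, ¬ P.lt x y) :
    ∀ x y : P.car ⊕ {q : Q.car // q ∉ Q.S},
      Relation.Map P.lt Sum.inl Sum.inl x y → x ∉ range (iotaQ P Q f) := by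
  rintro _ _ ⟨a, b, hab, rfl, rfl⟩ ha
  exact hPmax a (inl_mem_range_iotaQ_iff.1 ha) b hab

lemma not_mem_range_inl_of_map_lt (hQmin : ∀ x ∈ Q.S, ∀ y, ¬ Q.lt y x) :
    ∀ x y, Relation.Map Q.lt (iotaQ P Q f) (iotaQ P Q f) x y → y ∉ range Sum.inl := by
  rintro _ _ ⟨a, b, hab, rfl, rfl⟩ hb
  exact hQmin b (iotaQ_mem_range_inl_iff.1 hb) a hab

end Glue

/-- The gluing composition of ipomsets is well-defined: if `P` and
`Q` are ipomsets and `f : T_P ≃ S_Q` is the (unique) interface isomorphism, then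
`P * Q` is again an ipomset (in particular its precedence relation is a strict
partial order and its union with the event order is total). -/
theorem glue_isIpomset {L : Type} (P Q : PreIpomset L)
    (hP : IsIpomset P) (hQ : IsIpomset Q)
    (f : {x : P.car // x ∈ P.T} ≃ {y : Q.car // y ∈ Q.S})
    (hf : GlueOK P Q f) :
    IsIpomset (glue P Q f) := by
  obtain ⟨hPfin, hPirr, hPtrans, hPeoirr, hPeotrans, hPtot, hPmin, hPmax⟩ := hP
  obtain ⟨hQfin, hQirr, hQtrans, hQeoirr, hQeotrans, hQtot, hQmin, hQmax⟩ := hQ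
  have hlt₁ := isStrictOrderIn_map (β := (glue P Q f).car) Sum.inl_injective hPirr hPtrans
  have hlt₂ := isStrictOrderIn_map (iotaQ_injective (f := f)) hQirr hQtrans
  have heo₁ := isStrictOrderIn_map (β := (glue P Q f).car) Sum.inl_injective hPeoirr hPeotrans
  have heo₂ := isStrictOrderIn_map (iotaQ_injective (f := f)) hQeoirr hQeotrans
  have hlt₁B := not_mem_range_iotaQ_of_map_lt (f := f) hPmax
  have hlt₂A := not_mem_range_inl_of_map_lt (f := f) hQmin
  refine ⟨@Finite.instSum _ _ hPfin (@Subtype.finite _ hQfin _),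
    fun x h => seqUnion_irrefl hlt₁.irrefl hlt₂.irrefl x (glue_lt_iff.1 h),
    fun x y z hxy hyz => glue_lt_iff.2 (seqUnion_trans hlt₁ hlt₂ hlt₁B hlt₂A
      (glue_lt_iff.1 hxy) (glue_lt_iff.1 hyz)),
    fun x h => transGen_sup_irrefl heo₁ heo₂ (map_eo_iotaQ_imp_map_eo_inl hf)
      (map_eo_inl_imp_map_eo_iotaQ hf) x (glue_eo_iff.1 h),
    fun _ _ _ => TransGen.trans, fun x y hne => ?_, ?_, ?_⟩
  · refine (seqUnion_total mem_range_inl_or_mem_range_iotaQ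
      (map_total_on_range hPtot fun a b h => TransGen.single (Or.inl ⟨a, b, rfl, rfl, h⟩))
      (map_total_on_range hQtot fun a b h => TransGen.single (Or.inr ⟨a, b, rfl, rfl, h⟩))
      hne).imp glue_lt_iff.2 (Or.imp_left glue_lt_iff.2)
  · rintro _ ⟨s, hs, rfl⟩ y h
    exact not_seqUnion_of_minimal hlt₂A (mem_range_self s)
      (not_map_apply_right Sum.inl_injective (hPmin s hs)) y (glue_lt_iff.1 h)
  · rintro _ ⟨t, ht, rfl⟩ y h
    exact not_seqUnion_of_maximal hlt₁B (mem_range_self t)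
      (not_map_apply_left iotaQ_injective (hQmax t ht)) y (glue_lt_iff.1 h)
end

section
/- Gluing composition of ipomsets is associative up to the unique isomorphism: for composable ipomsets P, Q, R, (P * Q) * R ≅ P * (Q * R). -/
attribute [local instance] Classical.propDecidable

/-- `P` is discrete: the precedence order is empty. -/
def IsDiscreteIpom {L : Type} (P : PreIpomset L) : Prop := ∀ x y, ¬ P.lt x y

/-!
Both `(P * Q) * R` and `P * (Q * R)` have carrier `P ⊔ (Q ∖ S_Q) ⊔ (R ∖ S_R)`, into which `P`, `Q`
and `R` embed. Along these embeddings, the precedence of either triple gluing is the union of the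
three precedences with the three cross relations `(P ∖ T_P) × (Q ∖ S_Q)`, `(P ∖ T_P) × (R ∖ S_R)`,
`(Q ∖ T_Q) × (R ∖ S_R)`, and its event order is the transitive closure of the union of the three
event orders, since a transitive closure nested inside another one can be flattened. The evident
bijection between the two carriers commutes with the embeddings, so it carries one description
onto the other.
-/

open Function Relation Set

namespace Relation

variable {α β γ δ : Type*}

lemma map_sup (r s : α → β → Prop) (f : α → γ) (g : β → δ) :
    Relation.Map (r ⊔ s) f g = Relation.Map r f g ⊔ Relation.Map s f g := by
  ext c d
  simp only [Relation.Map, Pi.sup_apply, sup_Prop_eq, or_and_right, exists_or]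

lemma map_transGen_le (r : α → α → Prop) (f : α → β) :
    Relation.Map (TransGen r) f f ≤ TransGen (Relation.Map r f f) := by
  rintro _ _ ⟨a, b, h, rfl, rfl⟩
  exact TransGen.lift f (fun a b h => ⟨a, b, h, rfl, rfl⟩) a b h

lemma transGen_map_apply_apply {r : α → α → Prop} {f : α → β} (hf : Injective f) {a b : α} :
    TransGen (Relation.Map r f f) (f a) (f b) ↔ TransGen r a b := by
  refine ⟨fun h => ?_, TransGen.lift f (fun a b h => ⟨a, b, h, rfl, rfl⟩) a b⟩
  suffices ∀ c, TransGen (Relation.Map r f f) (f a) c → ∃ b, f b = c ∧ TransGen r a b by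
    obtain ⟨b', hb', h'⟩ := this _ h
    exact hf hb' ▸ h'
  intro c h
  induction h with
  | single h =>
    obtain ⟨a', b, h, ha, rfl⟩ := h
    exact ⟨b, rfl, .single (hf ha ▸ h)⟩
  | tail _ h ih =>
    obtain ⟨b, rfl, hab⟩ := ih
    obtain ⟨b', c, h, hb, rfl⟩ := h
    exact ⟨c, rfl, hab.tail (hf hb ▸ h)⟩

lemma transGen_map_transGen_sup (r : α → α → Prop) (f : α → β) (s : β → β → Prop) :
    TransGen (Relation.Map (TransGen r) f f ⊔ s) = TransGen (Relation.Map r f f ⊔ s) :=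
  le_antisymm
    (TransGen.closed (sup_le ((map_transGen_le r f).trans (TransGen.mono le_sup_left))
      (le_sup_right.trans fun _ _ => TransGen.single)))
    (TransGen.mono (sup_le_sup_right (map_mono fun _ _ => TransGen.single) s))

end Relation

section CrossRel

variable {α β γ δ : Type*}

def crossRel (A : Set α) (B : Set β) (a : α) (b : β) : Prop := a ∈ A ∧ b ∈ B

lemma map_crossRel (A : Set α) (B : Set β) (f : α → γ) (g : β → δ) :
    Relation.Map (crossRel A B) f g = crossRel (f '' A) (g '' B) := by
  ext c d
  simp only [Relation.Map, crossRel, mem_image]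
  constructor
  · rintro ⟨a, b, ⟨ha, hb⟩, rfl, rfl⟩
    exact ⟨⟨a, ha, rfl⟩, ⟨b, hb, rfl⟩⟩
  · rintro ⟨⟨a, ha, rfl⟩, ⟨b, hb, rfl⟩⟩
    exact ⟨a, b, ⟨ha, hb⟩, rfl, rfl⟩

lemma crossRel_union_left (A A' : Set α) (B : Set β) :
    crossRel (A ∪ A') B = crossRel A B ⊔ crossRel A' B := by
  ext a b
  simp only [crossRel, mem_union, Pi.sup_apply, sup_Prop_eq, or_and_right]

lemma crossRel_union_right (A : Set α) (B B' : Set β) :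
    crossRel A (B ∪ B') = crossRel A B ⊔ crossRel A B' := by
  ext a b
  simp only [crossRel, mem_union, Pi.sup_apply, sup_Prop_eq, and_or_left]

end CrossRel

section Glue

variable {L : Type} (P Q : PreIpomset L) (f : {x : P.car // x ∈ P.T} ≃ {y : Q.car // y ∈ Q.S})

def glueLeft : P.car → (glue P Q f).car := Sum.inl

noncomputable def glueRight : Q.car → (glue P Q f).car := iotaQ P Q f

variable {P Q}

lemma glueRight_of_mem {q : Q.car} (hq : q ∈ Q.S) :
    glueRight P Q f q = glueLeft P Q f (f.symm ⟨q, hq⟩).1 :=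
  dif_pos hq

lemma glueRight_of_notMem {q : Q.car} (hq : q ∉ Q.S) :
    glueRight P Q f q = (Sum.inr ⟨q, hq⟩ : (glue P Q f).car) :=
  dif_neg hq

lemma glueRight_apply_coe (p : {x : P.car // x ∈ P.T}) :
    glueRight P Q f (f p).1 = glueLeft P Q f p.1 := by
  simp [glueRight_of_mem f (f p).2]

lemma glueLeft_injective : Injective (glueLeft P Q f) := Sum.inl_injective

lemma glueRight_injective : Injective (glueRight P Q f) := by
  intro a b h
  by_cases ha : a ∈ Q.S <;> by_cases hb : b ∈ Q.S
  · rw [glueRight_of_mem f ha, glueRight_of_mem f hb] at h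
    simpa using f.symm.injective (Subtype.ext (glueLeft_injective f h))
  · rw [glueRight_of_mem f ha, glueRight_of_notMem f hb] at h
    exact (Sum.inl_ne_inr h).elim
  · rw [glueRight_of_notMem f ha, glueRight_of_mem f hb] at h
    exact (Sum.inr_ne_inl h).elim
  · rw [glueRight_of_notMem f ha, glueRight_of_notMem f hb] at h
    exact congrArg Subtype.val (Sum.inr_injective h)

lemma glue_S : (glue P Q f).S = glueLeft P Q f '' P.S := rfl

lemma glue_T : (glue P Q f).T = glueRight P Q f '' Q.T := rfl

lemma compl_glue_S : (glue P Q f).Sᶜ = glueLeft P Q f '' P.Sᶜ ∪ glueRight P Q f '' Q.Sᶜ := by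
  ext x
  rw [glue_S]
  simp only [mem_compl_iff, mem_union, mem_image]
  constructor
  · intro hx
    rcases x with p | ⟨q, hq⟩
    · exact Or.inl ⟨p, fun hp => hx ⟨p, hp, rfl⟩, rfl⟩
    · exact Or.inr ⟨q, hq, glueRight_of_notMem f hq⟩
  · rintro (⟨p, hp, rfl⟩ | ⟨q, hq, rfl⟩) ⟨p', hp', h⟩
    · exact hp (glueLeft_injective f h ▸ hp')
    · rw [glueRight_of_notMem f hq] at h
      exact Sum.inl_ne_inr h

lemma compl_glue_T : (glue P Q f).Tᶜ = glueLeft P Q f '' P.Tᶜ ∪ glueRight P Q f '' Q.Tᶜ := by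
  ext x
  rw [glue_T]
  simp only [mem_compl_iff, mem_union, mem_image]
  constructor
  · intro hx
    rcases x with p | ⟨q, hq⟩
    · by_cases hp : p ∈ P.T
      · have hx' := glueRight_apply_coe f ⟨p, hp⟩
        exact Or.inr ⟨f ⟨p, hp⟩, fun hT => hx ⟨_, hT, hx'⟩, hx'⟩
      · exact Or.inl ⟨p, hp, rfl⟩
    · exact Or.inr ⟨q, fun hT => hx ⟨q, hT, glueRight_of_notMem f hq⟩, glueRight_of_notMem f hq⟩
  · rintro (⟨p, hp, rfl⟩ | ⟨q, hq, rfl⟩) ⟨q', hq', h⟩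
    · by_cases hs : q' ∈ Q.S
      · rw [glueRight_of_mem f hs] at h
        exact hp (glueLeft_injective f h ▸ (f.symm ⟨q', hs⟩).2)
      · rw [glueRight_of_notMem f hs] at h
        exact Sum.inr_ne_inl h
    · exact hq (glueRight_injective f h ▸ hq')

lemma glue_lt : (glue P Q f).lt = Relation.Map P.lt (glueLeft P Q f) (glueLeft P Q f) ⊔
    Relation.Map Q.lt (glueRight P Q f) (glueRight P Q f) ⊔
    crossRel (glueLeft P Q f '' P.Tᶜ) (glueRight P Q f '' Q.Sᶜ) := by
  ext x y
  simp only [Relation.Map, crossRel, Pi.sup_apply, sup_Prop_eq, mem_image, mem_compl_iff]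
  simp only [glue, glueLeft, glueRight]
  grind

lemma glue_eo : (glue P Q f).eo = TransGen (Relation.Map P.eo (glueLeft P Q f) (glueLeft P Q f) ⊔
    Relation.Map Q.eo (glueRight P Q f) (glueRight P Q f)) := by
  show TransGen _ = TransGen _
  congr 1
  ext (x : (glue P Q f).car) (y : (glue P Q f).car)
  simp only [Relation.Map, Pi.sup_apply, sup_Prop_eq]
  simp only [glueLeft, glueRight]
  grind

end Glue

section TripleGlue

variable {L : Type} (P Q R : PreIpomset L) {X Y : Type*}

def TripleGlueLt (iP : P.car → X) (iQ : Q.car → X) (iR : R.car → X) : X → X → Prop :=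
  Relation.Map P.lt iP iP ⊔ Relation.Map Q.lt iQ iQ ⊔ Relation.Map R.lt iR iR ⊔
    crossRel (iP '' P.Tᶜ) (iQ '' Q.Sᶜ) ⊔ crossRel (iP '' P.Tᶜ) (iR '' R.Sᶜ) ⊔
    crossRel (iQ '' Q.Tᶜ) (iR '' R.Sᶜ)

def TripleGlueStep (iP : P.car → X) (iQ : Q.car → X) (iR : R.car → X) : X → X → Prop :=
  Relation.Map P.eo iP iP ⊔ Relation.Map Q.eo iQ iQ ⊔ Relation.Map R.eo iR iR

variable {P Q R} {iP : P.car → X} {iQ : Q.car → X} {iR : R.car → X}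

lemma map_tripleGlueLt (e : X → Y) :
    Relation.Map (TripleGlueLt P Q R iP iQ iR) e e =
      TripleGlueLt P Q R (e ∘ iP) (e ∘ iQ) (e ∘ iR) := by
  simp only [TripleGlueLt, Relation.map_sup, map_map, map_crossRel, image_comp]

lemma map_tripleGlueStep (e : X → Y) :
    Relation.Map (TripleGlueStep P Q R iP iQ iR) e e =
      TripleGlueStep P Q R (e ∘ iP) (e ∘ iQ) (e ∘ iR) := by
  simp only [TripleGlueStep, Relation.map_sup, map_map]

lemma tripleGlueLt_apply_apply {e : X → Y} (he : Injective e) {jP : P.car → Y} {jQ : Q.car → Y}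
    {jR : R.car → Y} (hP : e ∘ iP = jP) (hQ : e ∘ iQ = jQ) (hR : e ∘ iR = jR) (x y : X) :
    TripleGlueLt P Q R jP jQ jR (e x) (e y) ↔ TripleGlueLt P Q R iP iQ iR x y := by
  subst hP hQ hR
  rw [← map_tripleGlueLt, map_apply_apply he he]

lemma transGen_tripleGlueStep_apply_apply {e : X → Y} (he : Injective e) {jP : P.car → Y}
    {jQ : Q.car → Y} {jR : R.car → Y} (hP : e ∘ iP = jP) (hQ : e ∘ iQ = jQ) (hR : e ∘ iR = jR)
    (x y : X) :
    TransGen (TripleGlueStep P Q R jP jQ jR) (e x) (e y) ↔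
      TransGen (TripleGlueStep P Q R iP iQ iR) x y := by
  subst hP hQ hR
  rw [← map_tripleGlueStep, transGen_map_apply_apply he]

end TripleGlue

section Nested

variable {L : Type} {P Q R : PreIpomset L}

lemma glue_glue_lt (f : {x : P.car // x ∈ P.T} ≃ {y : Q.car // y ∈ Q.S})
    (g : {x : (glue P Q f).car // x ∈ (glue P Q f).T} ≃ {y : R.car // y ∈ R.S}) :
    (glue (glue P Q f) R g).lt = TripleGlueLt P Q R (glueLeft _ R g ∘ glueLeft P Q f)
      (glueLeft _ R g ∘ glueRight P Q f) (glueRight _ R g) := by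
  rw [glue_lt, glue_lt, compl_glue_T]
  simp only [TripleGlueLt, Relation.map_sup, map_map, map_crossRel, image_union,
    crossRel_union_left, image_comp]
  ac_rfl

lemma glue_glue_eo (f : {x : P.car // x ∈ P.T} ≃ {y : Q.car // y ∈ Q.S})
    (g : {x : (glue P Q f).car // x ∈ (glue P Q f).T} ≃ {y : R.car // y ∈ R.S}) :
    (glue (glue P Q f) R g).eo = TransGen (TripleGlueStep P Q R (glueLeft _ R g ∘ glueLeft P Q f)
      (glueLeft _ R g ∘ glueRight P Q f) (glueRight _ R g)) := by
  rw [glue_eo, glue_eo, transGen_map_transGen_sup]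
  simp only [TripleGlueStep, Relation.map_sup, map_map]

lemma glue_glue_right_lt (g : {x : Q.car // x ∈ Q.T} ≃ {y : R.car // y ∈ R.S})
    (f : {x : P.car // x ∈ P.T} ≃ {y : (glue Q R g).car // y ∈ (glue Q R g).S}) :
    (glue P (glue Q R g) f).lt = TripleGlueLt P Q R (glueLeft P _ f)
      (glueRight P _ f ∘ glueLeft Q R g) (glueRight P _ f ∘ glueRight Q R g) := by
  rw [glue_lt, glue_lt, compl_glue_S]
  simp only [TripleGlueLt, Relation.map_sup, map_map, map_crossRel, image_union,
    crossRel_union_right, image_comp]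
  ac_rfl

lemma glue_glue_right_eo (g : {x : Q.car // x ∈ Q.T} ≃ {y : R.car // y ∈ R.S})
    (f : {x : P.car // x ∈ P.T} ≃ {y : (glue Q R g).car // y ∈ (glue Q R g).S}) :
    (glue P (glue Q R g) f).eo = TransGen (TripleGlueStep P Q R (glueLeft P _ f)
      (glueRight P _ f ∘ glueLeft Q R g) (glueRight P _ f ∘ glueRight Q R g)) := by
  rw [glue_eo, glue_eo, sup_comm, transGen_map_transGen_sup]
  simp only [TripleGlueStep, Relation.map_sup, map_map]
  ac_rfl

end Nested

section Assoc

variable {L : Type} {P Q R : PreIpomset L}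
  (f : {x : P.car // x ∈ P.T} ≃ {y : Q.car // y ∈ Q.S})
  (g : {x : Q.car // x ∈ Q.T} ≃ {y : R.car // y ∈ R.S})
  (g' : {x : (glue P Q f).car // x ∈ (glue P Q f).T} ≃ {y : R.car // y ∈ R.S})
  (f' : {x : P.car // x ∈ P.T} ≃ {y : (glue Q R g).car // y ∈ (glue Q R g).S})

lemma glueLeft_notMem_glue_S {q : Q.car} (hq : q ∉ Q.S) : glueLeft Q R g q ∉ (glue Q R g).S := by
  rw [← mem_compl_iff, compl_glue_S]
  exact Or.inl ⟨q, hq, rfl⟩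

lemma glueRight_notMem_glue_S {r : R.car} (hr : r ∉ R.S) : glueRight Q R g r ∉ (glue Q R g).S := by
  rw [← mem_compl_iff, compl_glue_S]
  exact Or.inr ⟨r, hr, rfl⟩

noncomputable def assocEquiv : (glue (glue P Q f) R g').car ≃ (glue P (glue Q R g) f').car where
  toFun
    | Sum.inl (Sum.inl p) => Sum.inl p
    | Sum.inl (Sum.inr q) => Sum.inr ⟨Sum.inl q.1, glueLeft_notMem_glue_S g q.2⟩
    | Sum.inr r => Sum.inr ⟨Sum.inr r, fun ⟨_, _, h⟩ => Sum.inl_ne_inr h⟩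
  invFun
    | Sum.inl p => Sum.inl (Sum.inl p)
    | Sum.inr ⟨Sum.inl q, h⟩ => Sum.inl (Sum.inr ⟨q, fun hq => h ⟨q, hq, rfl⟩⟩)
    | Sum.inr ⟨Sum.inr r, _⟩ => Sum.inr r
  left_inv := by rintro ((p | q) | r) <;> rfl
  right_inv := by rintro (p | ⟨q | r, h⟩) <;> rfl

lemma assocEquiv_comp_glueLeft_glueLeft :
    assocEquiv f g g' f' ∘ (glueLeft _ R g' ∘ glueLeft P Q f) = glueLeft P _ f' :=
  rfl

lemma assocEquiv_comp_glueLeft_glueRight (hf' : ∀ p, (f' p).1 = Sum.inl (f p).1) :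
    assocEquiv f g g' f' ∘ (glueLeft _ R g' ∘ glueRight P Q f) =
      glueRight P _ f' ∘ glueLeft Q R g := by
  funext q
  by_cases hq : q ∈ Q.S
  · obtain ⟨p, rfl⟩ : ∃ p, (f p).1 = q := ⟨f.symm ⟨q, hq⟩, by simp⟩
    simp only [comp_apply, glueRight_apply_coe]
    rw [show glueLeft Q R g (f p).1 = (f' p).1 from (hf' p).symm, glueRight_apply_coe]
    rfl
  · simp only [comp_apply, glueRight_of_notMem f hq,
      glueRight_of_notMem f' (glueLeft_notMem_glue_S g hq)]
    rfl

lemma assocEquiv_comp_glueRight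
    (hg' : ∀ t ht, (g' ⟨iotaQ P Q f t.1, ht⟩).1 = (g t).1)
    (hf' : ∀ p, (f' p).1 = Sum.inl (f p).1) :
    assocEquiv f g g' f' ∘ glueRight _ R g' = glueRight P _ f' ∘ glueRight Q R g := by
  funext r
  by_cases hr : r ∈ R.S
  · obtain ⟨t, rfl⟩ : ∃ t, (g t).1 = r := ⟨g.symm ⟨r, hr⟩, by simp⟩
    have hmem : glueRight P Q f t.1 ∈ (glue P Q f).T := ⟨t.1, t.2, rfl⟩
    simp only [comp_apply, glueRight_apply_coe]
    rw [← hg' t hmem, glueRight_apply_coe]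
    exact congrFun (assocEquiv_comp_glueLeft_glueRight f g g' f' hf') t.1
  · rw [comp_apply, comp_apply, glueRight_of_notMem g' hr,
      glueRight_of_notMem f' (glueRight_notMem_glue_S g hr)]
    exact congrArg Sum.inr (Subtype.ext (glueRight_of_notMem g hr).symm)

end Assoc

theorem glue_assoc_general {L : Type} (P Q R : PreIpomset L)
    (f : {x : P.car // x ∈ P.T} ≃ {y : Q.car // y ∈ Q.S})
    (g : {x : Q.car // x ∈ Q.T} ≃ {y : R.car // y ∈ R.S})
    (g' : {x : (glue P Q f).car // x ∈ (glue P Q f).T} ≃ {y : R.car // y ∈ R.S})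
    (hg' : ∀ (t : {x : Q.car // x ∈ Q.T}) (ht : iotaQ P Q f t.1 ∈ (glue P Q f).T),
      (g' ⟨iotaQ P Q f t.1, ht⟩).1 = (g t).1)
    (f' : {x : P.car // x ∈ P.T} ≃ {y : (glue Q R g).car // y ∈ (glue Q R g).S})
    (hf' : ∀ p : {x : P.car // x ∈ P.T}, (f' p).1 = Sum.inl (f p).1) :
    IpomIso (glue (glue P Q f) R g') (glue P (glue Q R g) f') := by
  set e := assocEquiv f g g' f'
  have hleft := assocEquiv_comp_glueLeft_glueLeft f g g' f'
  have hmid := assocEquiv_comp_glueLeft_glueRight f g g' f' hf'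
  have hright := assocEquiv_comp_glueRight f g g' f' hg' hf'
  refine ⟨e, fun x y => ?_, fun x y => ?_, ?_, ?_, ?_⟩
  · rw [glue_glue_lt, glue_glue_right_lt, tripleGlueLt_apply_apply e.injective hleft hmid hright]
  · rw [glue_glue_eo, glue_glue_right_eo,
      transGen_tripleGlueStep_apply_apply e.injective hleft hmid hright]
  · rintro ((p | q) | r) <;> rfl
  · rw [glue_S, glue_S, glue_S, ← image_comp, ← image_comp, Function.comp_assoc, hleft]
  · rw [glue_T, glue_T, glue_T, ← image_comp, ← image_comp, hright]

/-- Gluing composition of ipomsets is associative up to the unique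
isomorphism: for composable ipomsets `P, Q, R` (with interface isomorphisms
`f : T_P ≃ S_Q` and `g : T_Q ≃ S_R`, and the induced interface isomorphisms
`g' : T_{P*Q} ≃ S_R` and `f' : T_P ≃ S_{Q*R}`), we have
`(P * Q) * R ≅ P * (Q * R)`. -/
theorem glue_assoc {L : Type} (P Q R : PreIpomset L)
    (hP : IsIpomset P) (hQ : IsIpomset Q) (hR : IsIpomset R)
    (f : {x : P.car // x ∈ P.T} ≃ {y : Q.car // y ∈ Q.S})
    (g : {x : Q.car // x ∈ Q.T} ≃ {y : R.car // y ∈ R.S})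
    (hf : GlueOK P Q f) (hg : GlueOK Q R g)
    (g' : {x : (glue P Q f).car // x ∈ (glue P Q f).T} ≃ {y : R.car // y ∈ R.S})
    (hg' : ∀ (t : {x : Q.car // x ∈ Q.T}) (ht : iotaQ P Q f t.1 ∈ (glue P Q f).T),
      (g' ⟨iotaQ P Q f t.1, ht⟩).1 = (g t).1)
    (f' : {x : P.car // x ∈ P.T} ≃ {y : (glue Q R g).car // y ∈ (glue Q R g).S})
    (hf' : ∀ p : {x : P.car // x ∈ P.T}, (f' p).1 = Sum.inl (f p).1) :
    IpomIso (glue (glue P Q f) R g') (glue P (glue Q R g) f') :=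
  glue_assoc_general P Q R f g g' hg' f' hf'
end

section
/- Every gluing of finitely many discrete ipomsets is an interval ipomset: if P = P_1 * ⋯ * P_m where each P_i has empty precedence order, then the precedence order of P is an interval order. -/
attribute [local instance] Classical.propDecidable

/-- `P` is discrete: the precedence order is empty. -/
def IsDiscretePom {L : Type} (P : PreIpomset L) : Prop := ∀ x y, ¬ P.lt x y

/-- `P` is a finite gluing of discrete ipomsets (with any bracketing). -/
inductive GluedFromDiscretes {L : Type} : PreIpomset L → Prop
  | disc (P : PreIpomset L) (hP : IsIpomset P) (hd : IsDiscretePom P) :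
      GluedFromDiscretes P
  | glue (P Q : PreIpomset L)
      (f : {x : P.car // x ∈ P.T} ≃ {y : Q.car // y ∈ Q.S})
      (hf : GlueOK P Q f)
      (hP : GluedFromDiscretes P) (hQ : GluedFromDiscretes Q) :
      GluedFromDiscretes (glue P Q f)

/-! By induction on the bracketing, together with the fact that sources stay `lt`-minimal and
targets `lt`-maximal. In `P * Q` an element of `P` with a successor in `P` is then outside `T_P`
and an element of `Q` with a predecessor in `Q` is outside `S_Q`. Hence, of two precedences
`x < z`, `y < w` not both from `P` or both from `Q`, one of the crossing pairs `(x, w)`, `(y, z)`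
lies in `(P ∖ T_P) × (Q ∖ S_Q)`. -/

def IsIntervalRel {α : Type*} (r : α → α → Prop) : Prop :=
  ∀ x y z w, r x z → r y w → r x w ∨ r y z

theorem IsIntervalRel.map {α β : Type*} {r : α → α → Prop} (hr : IsIntervalRel r) (g : α → β) :
    IsIntervalRel (Relation.Map r g g) := by
  rintro _ _ _ _ ⟨a, b, hab, rfl, rfl⟩ ⟨c, d, hcd, rfl, rfl⟩
  exact (hr a c b d hab hcd).imp (fun h => ⟨a, d, h, rfl, rfl⟩) (fun h => ⟨c, b, h, rfl, rfl⟩)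

theorem IsIntervalRel.sup_prod {α : Type*} {r₁ r₂ : α → α → Prop} {A B : Set α}
    (h₁ : IsIntervalRel r₁) (h₂ : IsIntervalRel r₂)
    (hA : ∀ x y, r₁ x y → x ∈ A) (hB : ∀ x y, r₂ x y → y ∈ B) :
    IsIntervalRel (fun x y => r₁ x y ∨ r₂ x y ∨ (x ∈ A ∧ y ∈ B)) := by
  intro x y z w hxz hyw
  by_cases hxw : x ∈ A ∧ w ∈ B
  · exact .inl (.inr (.inr hxw))
  by_cases hyz : y ∈ A ∧ z ∈ B
  · exact .inr (.inr (.inr hyz))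
  rcases hxz with hxz | hxz | ⟨hx, hz⟩ <;> rcases hyw with hyw | hyw | ⟨hy, hw⟩
  · exact (h₁ x y z w hxz hyw).imp .inl .inl
  · exact absurd ⟨hA x z hxz, hB y w hyw⟩ hxw
  · exact absurd ⟨hA x z hxz, hw⟩ hxw
  · exact absurd ⟨hA y w hyw, hB x z hxz⟩ hyz
  · exact (h₂ x y z w hxz hyw).imp (.inr ∘ .inl) (.inr ∘ .inl)
  · exact absurd ⟨hy, hB x z hxz⟩ hyz
  · exact absurd ⟨hA y w hyw, hz⟩ hyz
  · exact absurd ⟨hx, hB y w hyw⟩ hxw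
  · exact absurd ⟨hx, hw⟩ hxw

namespace PreIpomset

variable {L : Type}

def SourcesMinimal (P : PreIpomset L) : Prop := ∀ s ∈ P.S, ∀ y, ¬ P.lt y s

def TargetsMaximal (P : PreIpomset L) : Prop := ∀ t ∈ P.T, ∀ y, ¬ P.lt t y

theorem IsIpomset.sourcesMinimal {P : PreIpomset L} (hP : IsIpomset P) : P.SourcesMinimal :=
  hP.2.2.2.2.2.2.1

theorem IsIpomset.targetsMaximal {P : PreIpomset L} (hP : IsIpomset P) : P.TargetsMaximal :=
  hP.2.2.2.2.2.2.2

variable {P Q : PreIpomset L} {f : {x : P.car // x ∈ P.T} ≃ {y : Q.car // y ∈ Q.S}}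

theorem iotaQ_eq_inl_iff {b : Q.car} {a : P.car} :
    iotaQ P Q f b = Sum.inl a ↔ ∃ hb : b ∈ Q.S, (f.symm ⟨b, hb⟩).1 = a := by
  unfold iotaQ
  split_ifs with hb <;> simp [hb]

theorem mem_S_of_iotaQ_eq_inl {b : Q.car} {a : P.car} (h : iotaQ P Q f b = Sum.inl a) :
    b ∈ Q.S :=
  (iotaQ_eq_inl_iff.1 h).1

theorem mem_T_of_iotaQ_eq_inl {b : Q.car} {a : P.car} (h : iotaQ P Q f b = Sum.inl a) :
    a ∈ P.T := by
  obtain ⟨hb, rfl⟩ := iotaQ_eq_inl_iff.1 h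
  exact (f.symm ⟨b, hb⟩).2

theorem iotaQ_injective : Function.Injective (iotaQ P Q f) := by
  intro a b h
  unfold iotaQ at h
  split_ifs at h with ha hb
  · simpa using f.symm.injective (Subtype.ext (Sum.inl.inj h))
  · exact congrArg Subtype.val (Sum.inr.inj h)

theorem glue_lt_iff {x y : (glue P Q f).car} :
    (glue P Q f).lt x y ↔
      Relation.Map P.lt Sum.inl Sum.inl x y ∨ Relation.Map Q.lt (iotaQ P Q f) (iotaQ P Q f) x y ∨
        (x ∈ Sum.inl '' P.Tᶜ ∧ y ∈ iotaQ P Q f '' Q.Sᶜ) := by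
  simp only [glue, Relation.Map]
  grind

theorem glue_isInterval (hP : IsInterval P) (hQ : IsInterval Q) (htP : P.TargetsMaximal)
    (hsQ : Q.SourcesMinimal) : IsInterval (glue P Q f) := by
  have h := IsIntervalRel.sup_prod (IsIntervalRel.map hP Sum.inl) (IsIntervalRel.map hQ (iotaQ P Q f))
    (A := Sum.inl '' P.Tᶜ) (B := iotaQ P Q f '' Q.Sᶜ)
    (by rintro _ _ ⟨a, b, hab, rfl, rfl⟩; exact ⟨a, fun ha => htP a ha b hab, rfl⟩)
    (by rintro _ _ ⟨a, b, hab, rfl, rfl⟩; exact ⟨b, fun hb => hsQ b hb a hab, rfl⟩)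
  intro x y z w hxz hyw
  exact (h x y z w (glue_lt_iff.1 hxz) (glue_lt_iff.1 hyw)).imp glue_lt_iff.2 glue_lt_iff.2

theorem glue_sourcesMinimal (hP : P.SourcesMinimal) (hQ : Q.SourcesMinimal) :
    (glue P Q f).SourcesMinimal := by
  rintro _ ⟨s, hs, rfl⟩ y hy
  rcases glue_lt_iff.1 hy with ⟨a, b, hab, -, hb⟩ | ⟨a, b, hab, -, hb⟩ | ⟨-, b, hb, hbs⟩
  · exact hP s hs a (Sum.inl.inj hb ▸ hab)
  · exact hQ b (mem_S_of_iotaQ_eq_inl hb) a hab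
  · exact hb (mem_S_of_iotaQ_eq_inl hbs)

theorem glue_targetsMaximal (hP : P.TargetsMaximal) (hQ : Q.TargetsMaximal) :
    (glue P Q f).TargetsMaximal := by
  rintro _ ⟨t, ht, rfl⟩ y hy
  rcases glue_lt_iff.1 hy with ⟨a, b, hab, ha, -⟩ | ⟨a, b, hab, ha, -⟩ | ⟨⟨a, ha, hat⟩, -⟩
  · exact hP a (mem_T_of_iotaQ_eq_inl ha.symm) b hab
  · exact hQ t ht b (iotaQ_injective ha ▸ hab)
  · exact ha (mem_T_of_iotaQ_eq_inl hat.symm)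

end PreIpomset

open PreIpomset in
theorem GluedFromDiscretes.isInterval_sourcesMinimal_targetsMaximal {L : Type}
    {P : PreIpomset L} (h : GluedFromDiscretes P) :
    IsInterval P ∧ P.SourcesMinimal ∧ P.TargetsMaximal := by
  induction h with
  | disc P hP hd =>
    exact ⟨fun x _ z _ hxz _ => absurd hxz (hd x z), hP.sourcesMinimal, hP.targetsMaximal⟩
  | glue P Q f _ _ _ ihP ihQ =>
    exact ⟨glue_isInterval ihP.1 ihQ.1 ihP.2.2 ihQ.2.1, glue_sourcesMinimal ihP.2.1 ihQ.2.1,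
      glue_targetsMaximal ihP.2.2 ihQ.2.2⟩

/-- Every gluing of finitely many discrete ipomsets is an interval
ipomset: if `P = P₁ * ⋯ * P_m` where each `P_i` has empty precedence order, then
the precedence order of `P` is an interval order. -/
theorem gluedFromDiscretes_isInterval {L : Type} (P : PreIpomset L)
    (h : GluedFromDiscretes P) : IsInterval P :=
  h.isInterval_sourcesMinimal_targetsMaximal.1
end

section
/- The minimal discrete decomposition of an interval ipomset is unique: if P is an interval ipomset, then the decomposition P = P_1 * ⋯ * P_m in which the underlying sets Q_i of the P_i are exactly the maximal antichains of P (linearly ordered Q_1 ≺ ⋯ ≺ Q_m), S_1 = S_P, T_m = T_P, and T_i = S_{i+1} = P_i ∩ P_{i+1}, is uniquely determined by P. -/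
/-- `Q` is a maximal antichain for `lt`. -/
def IsMaxLtAntichain {P : Type} (lt : P → P → Prop) (Q : Set P) : Prop :=
  IsLtAntichain lt Q ∧ ∀ R : Set P, IsLtAntichain lt R → Q ⊆ R → Q = R

/-- The data `(m, Q, Sf, Tf)` is a minimal discrete decomposition of the
ipomset `(P, lt, S, T)`: there are `m` discrete pieces, supported on the sets
`Q i`, which are exactly the maximal antichains of `lt` listed in `≺`-order;
the source interface of the first piece is `S`, the target interface of the
last piece is `T`, and consecutive interfaces are the intersections
`Q i ∩ Q (i+1)`. -/
def IsMinDecomp {P : Type} (lt : P → P → Prop) (S T : Set P)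
    (m : ℕ) (Q Sf Tf : Fin m → Set P) : Prop :=
  0 < m ∧
  (∀ i, IsMaxLtAntichain lt (Q i)) ∧
  (∀ U : Set P, IsMaxLtAntichain lt U → ∃ i, U = Q i) ∧
  (∀ i j : Fin m, i < j → achPrec lt (Q i) (Q j)) ∧
  (∀ h0 : 0 < m, Sf ⟨0, h0⟩ = S) ∧
  (∀ hm : m - 1 < m, Tf ⟨m - 1, hm⟩ = T) ∧
  (∀ (i : Fin m) (h : i.1 + 1 < m),
    Tf i = Q i ∩ Q ⟨i.1 + 1, h⟩ ∧ Sf ⟨i.1 + 1, h⟩ = Q i ∩ Q ⟨i.1 + 1, h⟩)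

/-!
The pieces of a minimal discrete decomposition enumerate all maximal antichains, increasingly
for `≺`. Since `≺` is asymmetric on maximal antichains (two that precede each other both ways have
an antichain as their union), such an enumeration is unique, and the interfaces are read off from
the pieces.
-/

theorem achPrec_asymm_s9 {P : Type} {lt : P → P → Prop} {U T : Set P}
    (hU : IsMaxLtAntichain lt U) (hT : IsMaxLtAntichain lt T)
    (hUT : achPrec lt U T) : ¬ achPrec lt T U := by
  intro hTU
  have hunion : IsLtAntichain lt (U ∪ T) := by
    rintro x (hx | hx) y (hy | hy) hxy
    · exact hU.1 x hx y hy hxy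
    · exact ⟨hTU.2 y hy x hx, hUT.2 x hx y hy⟩
    · exact ⟨hUT.2 y hy x hx, hTU.2 x hx y hy⟩
    · exact hT.1 x hx y hy hxy
  exact hUT.1 ((hU.2 _ hunion Set.subset_union_left).trans
    (hT.2 _ hunion Set.subset_union_right).symm)

theorem Fin.eq_of_range_eq_of_rel {α : Type*} {r : α → α → Prop} {m₁ m₂ : ℕ}
    {u : Fin m₁ → α} {v : Fin m₂ → α} (hasymm : ∀ i j, r (v i) (v j) → ¬ r (v j) (v i))
    (hu : ∀ i j, i < j → r (u i) (u j)) (hv : ∀ i j, i < j → r (v i) (v j))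
    (hrange : Set.range u = Set.range v) :
    m₁ = m₂ ∧ ∀ (i : ℕ) (h₁ : i < m₁) (h₂ : i < m₂), u ⟨i, h₁⟩ = v ⟨i, h₂⟩ := by
  have hv_inj : Function.Injective v := by
    intro i j hij
    by_contra hne
    rcases lt_or_gt_of_ne hne with hlt | hgt
    · have h := hv i j hlt
      exact hasymm i j h (hij ▸ h)
    · have h := hv j i hgt
      exact hasymm j i h (hij ▸ h)
  choose f hf using fun i ↦ hrange ▸ Set.mem_range_self (f := u) i
  have hf_strictMono : StrictMono f := by
    intro i j hij
    have h := hu i j hij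
    rw [← hf i, ← hf j] at h
    rcases lt_trichotomy (f i) (f j) with hlt | heq | hgt
    · exact hlt
    · rw [heq] at h
      exact absurd h (hasymm _ _ h)
    · exact absurd (hv _ _ hgt) (hasymm _ _ h)
  have hf_surj : Function.Surjective f := by
    intro j
    obtain ⟨i, hi⟩ : v j ∈ Set.range u := hrange ▸ Set.mem_range_self j
    exact ⟨i, hv_inj ((hf i).trans hi)⟩
  obtain rfl : m₁ = m₂ :=
    Fin.equiv_iff_eq.mp ⟨Equiv.ofBijective f ⟨hf_strictMono.injective, hf_surj⟩⟩
  have hf_id : f = id := (hf_strictMono.range_inj strictMono_id).mp <| by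
    rw [Set.range_id, Set.range_eq_univ.mpr hf_surj]
  exact ⟨rfl, fun i h _ ↦ by rw [← hf, hf_id, id]⟩

namespace IsMinDecomp

variable {P : Type} {lt : P → P → Prop} {S T : Set P} {m : ℕ} {Q Sf Tf Sf' Tf' : Fin m → Set P}

theorem range_eq (h : IsMinDecomp lt S T m Q Sf Tf) :
    Set.range Q = {U | IsMaxLtAntichain lt U} := by
  ext U
  refine ⟨?_, fun hU ↦ ?_⟩
  · rintro ⟨i, rfl⟩
    exact h.2.1 i
  · obtain ⟨i, rfl⟩ := h.2.2.1 U hU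
    exact Set.mem_range_self i

theorem sourceInterfaces_eq (h : IsMinDecomp lt S T m Q Sf Tf)
    (h' : IsMinDecomp lt S T m Q Sf' Tf') : Sf = Sf' := by
  funext ⟨i, hi⟩
  cases i with
  | zero => rw [h.2.2.2.2.1 hi, h'.2.2.2.2.1 hi]
  | succ k => rw [(h.2.2.2.2.2.2 ⟨k, by omega⟩ hi).2, (h'.2.2.2.2.2.2 ⟨k, by omega⟩ hi).2]

theorem targetInterfaces_eq (h : IsMinDecomp lt S T m Q Sf Tf)
    (h' : IsMinDecomp lt S T m Q Sf' Tf') : Tf = Tf' := by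
  funext ⟨i, hi⟩
  by_cases hlast : i + 1 < m
  · rw [(h.2.2.2.2.2.2 ⟨i, hi⟩ hlast).1, (h'.2.2.2.2.2.2 ⟨i, hi⟩ hlast).1]
  · obtain rfl : i = m - 1 := by omega
    rw [h.2.2.2.2.2.1 hi, h'.2.2.2.2.2.1 hi]

end IsMinDecomp

theorem minDecomp_unique_general
    {P : Type}
    (lt : P → P → Prop) (S T : Set P)
    (m₁ m₂ : ℕ) (Q₁ Sf₁ Tf₁ : Fin m₁ → Set P) (Q₂ Sf₂ Tf₂ : Fin m₂ → Set P)
    (h₁ : IsMinDecomp lt S T m₁ Q₁ Sf₁ Tf₁)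
    (h₂ : IsMinDecomp lt S T m₂ Q₂ Sf₂ Tf₂) :
    m₁ = m₂ ∧
    ∀ (i : ℕ) (hi₁ : i < m₁) (hi₂ : i < m₂),
      Q₁ ⟨i, hi₁⟩ = Q₂ ⟨i, hi₂⟩ ∧ Sf₁ ⟨i, hi₁⟩ = Sf₂ ⟨i, hi₂⟩ ∧
      Tf₁ ⟨i, hi₁⟩ = Tf₂ ⟨i, hi₂⟩ := by
  obtain ⟨rfl, hQ⟩ := Fin.eq_of_range_eq_of_rel (r := achPrec lt)
    (fun i j ↦ achPrec_asymm_s9 (h₂.2.1 i) (h₂.2.1 j)) h₁.2.2.2.1 h₂.2.2.2.1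
    (h₁.range_eq.trans h₂.range_eq.symm)
  obtain rfl : Q₁ = Q₂ := funext fun ⟨i, hi⟩ ↦ hQ i hi hi
  obtain rfl := h₁.sourceInterfaces_eq h₂
  obtain rfl := h₁.targetInterfaces_eq h₂
  exact ⟨rfl, fun _ _ _ ↦ ⟨rfl, rfl, rfl⟩⟩

/-- The minimal discrete decomposition of an interval ipomset is
unique: any two minimal discrete decompositions of the same interval ipomset
have the same length and the same pieces and interfaces. -/
theorem minDecomp_unique
    {L P : Type} [Finite P]
    (lt eo : P → P → Prop) (lab : P → L) (S T : Set P)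
    (hlt_irr : ∀ x, ¬ lt x x) (hlt_tr : ∀ x y z, lt x y → lt y z → lt x z)
    (heo_irr : ∀ x, ¬ eo x x) (heo_tr : ∀ x y z, eo x y → eo y z → eo x z)
    (htot : ∀ x y : P, x ≠ y → lt x y ∨ lt y x ∨ eo x y ∨ eo y x)
    (hS : ∀ x ∈ S, ∀ y, ¬ lt y x) (hT : ∀ x ∈ T, ∀ y, ¬ lt x y)
    (hinterval : ∀ x y z w, lt x z → lt y w → lt x w ∨ lt y z)
    (m₁ m₂ : ℕ) (Q₁ Sf₁ Tf₁ : Fin m₁ → Set P) (Q₂ Sf₂ Tf₂ : Fin m₂ → Set P)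
    (h₁ : IsMinDecomp lt S T m₁ Q₁ Sf₁ Tf₁)
    (h₂ : IsMinDecomp lt S T m₂ Q₂ Sf₂ Tf₂) :
    m₁ = m₂ ∧
    ∀ (i : ℕ) (hi₁ : i < m₁) (hi₂ : i < m₂),
      Q₁ ⟨i, hi₁⟩ = Q₂ ⟨i, hi₂⟩ ∧ Sf₁ ⟨i, hi₁⟩ = Sf₂ ⟨i, hi₂⟩ ∧
      Tf₁ ⟨i, hi₁⟩ = Tf₂ ⟨i, hi₂⟩ :=
  minDecomp_unique_general lt S T m₁ m₂ Q₁ Sf₁ Tf₁ Q₂ Sf₂ Tf₂ h₁ h₂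
end

section
/- If Q and R are composable interval ipomsets, then the track object of their gluing is the gluing (pushout) of their track objects: □^{Q*R} = □^Q * □^R, where □^Q * □^R is the colimit of □^R ← □^U → □^Q along the initial inclusion of □^U into □^R and final inclusion of □^U into □^Q, for U ≅ T_Q ≅ S_R. -/
attribute [local instance] Classical.propDecidable

/-- The `ε`-component of a composition: `η(u) = ε (g⁻¹ u)` for `u ∈ g(Q)`,
and `η(u) = ζ u` otherwise. -/
noncomputable def compEps {A B : Type} (g : A → B) (ε : A → Tri) (ζ : B → Tri) : B → Tri :=
  fun b => if h : ∃ a, g a = b then ε h.choose else ζ b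

/-- The relation `≼_ipom = {(1,1),(0,0),(ex,ex),(1,ex),(1,0),(ex,0)}`. -/
def ipomRel : Tri → Tri → Prop := fun a b =>
  (a = Tri.one ∧ b = Tri.one) ∨ (a = Tri.zero ∧ b = Tri.zero) ∨
  (a = Tri.ex ∧ b = Tri.ex) ∨ (a = Tri.one ∧ b = Tri.ex) ∨
  (a = Tri.one ∧ b = Tri.zero) ∨ (a = Tri.ex ∧ b = Tri.zero)

/-- `x` and `y` are concurrent (incomparable for the precedence order). -/
def IpomPar {L : Type} (P : PreIpomset L) (x y : P.car) : Prop :=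
  x ≠ y ∧ ¬ P.lt x y ∧ ¬ P.lt y x

/-- `(f, ε)` is a morphism of (interval) ipomsets from `P` to `Q`:
`f` is injective, reflects the precedence order, preserves the essential event
order, and `ε : Q → {0, ex, 1}` satisfies `ε⁻¹(ex) = f(P)` and is compatible
with the precedence order via `≼_ipom`. -/
def IsIPHom {L : Type} (P Q : PreIpomset L) (f : P.car → Q.car) (ε : Q.car → Tri) : Prop :=
  Function.Injective f ∧
  (∀ x y, Q.lt (f x) (f y) → P.lt x y) ∧
  (∀ x y, IpomPar P x y → P.eo x y → Q.eo (f x) (f y)) ∧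
  (∀ q, ε q = Tri.ex ↔ q ∈ Set.range f) ∧
  (∀ q q', Q.lt q q' → ipomRel (ε q) (ε q'))

/-- The interface conclist of the gluing `Q * R`, i.e. the discrete ipomset on
`S_R ≅ T_Q`, with full interfaces. -/
def interfaceOb {L : Type} (R : PreIpomset L) : PreIpomset L where
  car := {r : R.car // r ∈ R.S}
  lt := fun _ _ => False
  eo := fun a b => R.eo a.1 b.1
  lab := fun a => R.lab a.1
  S := Set.univ
  T := Set.univ

/-- Function part of the initial inclusion `U → R` of the interface. -/
def uInMap {L : Type} (R : PreIpomset L) : (interfaceOb R).car → R.car := Subtype.val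

/-- `ε`-part of the initial inclusion `U → R` (events outside `S_R` unstarted). -/
noncomputable def uInEps {L : Type} (R : PreIpomset L) : R.car → Tri :=
  fun r => if r ∈ R.S then Tri.ex else Tri.zero

/-- Function part of the final inclusion `U → Q` of the interface. -/
noncomputable def uFinMap {L : Type} (Q R : PreIpomset L)
    (g : {x : Q.car // x ∈ Q.T} ≃ {y : R.car // y ∈ R.S}) :
    (interfaceOb R).car → Q.car := fun u => (g.symm u).1

/-- `ε`-part of the final inclusion `U → Q` (events outside `T_Q` terminated). -/
noncomputable def uFinEps {L : Type} (Q : PreIpomset L) : Q.car → Tri :=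
  fun q => if q ∈ Q.T then Tri.ex else Tri.one

/-- `ε`-part of the initial inclusion `Q → Q * R`. -/
def iQeps {L : Type} (Q R : PreIpomset L)
    (g : {x : Q.car // x ∈ Q.T} ≃ {y : R.car // y ∈ R.S}) : (glue Q R g).car → Tri :=
  fun x => match x with
    | Sum.inl _ => Tri.ex
    | Sum.inr _ => Tri.zero

/-- `ε`-part of the final inclusion `R → Q * R`. -/
noncomputable def fReps {L : Type} (Q R : PreIpomset L)
    (g : {x : Q.car // x ∈ Q.T} ≃ {y : R.car // y ∈ R.S}) : (glue Q R g).car → Tri :=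
  fun x => if x ∈ Set.range (iotaQ Q R g) then Tri.ex else Tri.one

/-- The track object `□^{Q*R}` is the pushout of
`□^R ← □^U → □^Q` (along the initial inclusion of `□^U` into `□^R` and the
final inclusion of `□^U` into `□^Q`).  Since colimits of presheaves are
computed objectwise, this is expressed on each cell-set
`□^P[V] = hom_IP(V, P)`, for every conclist `V`: the square commutes, the two
legs into `hom(V, Q*R)` are injective and jointly surjective, and their
intersection is exactly the image of `hom(V, U)`. -/
def TrackGluePushout {L : Type} (Q R : PreIpomset L)
    (g : {x : Q.car // x ∈ Q.T} ≃ {y : R.car // y ∈ R.S}) : Prop :=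
  ∀ (V : PreIpomset L), IsIpomset V → IsDiscreteIpom V →
    -- the square commutes
    ((∀ h θ, IsIPHom V (interfaceOb R) h θ →
      ((Sum.inl ∘ (uFinMap Q R g ∘ h) : V.car → (glue Q R g).car)
          = iotaQ Q R g ∘ (uInMap R ∘ h) ∧
        compEps (Sum.inl : Q.car → (glue Q R g).car)
            (compEps (uFinMap Q R g) θ (uFinEps Q)) (iQeps Q R g)
          = compEps (iotaQ Q R g) (compEps (uInMap R) θ (uInEps R)) (fReps Q R g))) ∧
    -- joint surjectivity of the two legs
    (∀ k κ, IsIPHom V (glue Q R g) k κ →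
      (∃ h θ, IsIPHom V Q h θ ∧ k = Sum.inl ∘ h ∧
        κ = compEps (Sum.inl : Q.car → (glue Q R g).car) θ (iQeps Q R g)) ∨
      (∃ h θ, IsIPHom V R h θ ∧ k = iotaQ Q R g ∘ h ∧
        κ = compEps (iotaQ Q R g) θ (fReps Q R g))) ∧
    -- injectivity of the leg through □^Q
    (∀ h θ h' θ', IsIPHom V Q h θ → IsIPHom V Q h' θ' →
      (Sum.inl ∘ h : V.car → (glue Q R g).car) = Sum.inl ∘ h' →
      compEps (Sum.inl : Q.car → (glue Q R g).car) θ (iQeps Q R g)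
        = compEps (Sum.inl : Q.car → (glue Q R g).car) θ' (iQeps Q R g) →
      h = h' ∧ θ = θ') ∧
    -- injectivity of the leg through □^R
    (∀ h θ h' θ', IsIPHom V R h θ → IsIPHom V R h' θ' →
      iotaQ Q R g ∘ h = iotaQ Q R g ∘ h' →
      compEps (iotaQ Q R g) θ (fReps Q R g) = compEps (iotaQ Q R g) θ' (fReps Q R g) →
      h = h' ∧ θ = θ') ∧
    -- the intersection of the legs is the image of □^U
    (∀ hq θq hr θr, IsIPHom V Q hq θq → IsIPHom V R hr θr →
      (Sum.inl ∘ hq : V.car → (glue Q R g).car) = iotaQ Q R g ∘ hr →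
      compEps (Sum.inl : Q.car → (glue Q R g).car) θq (iQeps Q R g)
        = compEps (iotaQ Q R g) θr (fReps Q R g) →
      ∃ h0 θ0, IsIPHom V (interfaceOb R) h0 θ0 ∧
        hq = uFinMap Q R g ∘ h0 ∧ θq = compEps (uFinMap Q R g) θ0 (uFinEps Q) ∧
        hr = uInMap R ∘ h0 ∧ θr = compEps (uInMap R) θ0 (uInEps R)))

/-! A cell of `□^{Q*R}` at a conclist `V` is a morphism `(k, κ) : V → Q * R`. Since `V` is
discrete, `κ` cannot be `ex` at both ends of a precedence `q < r` with `q ∈ Q ∖ T_Q` and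
`r ∈ R ∖ S_R`, and every such pair is a precedence of `Q * R`. Hence either `κ` vanishes on
`R ∖ S_R`, and `(k, κ)` factors through `Q`, or `κ` is `1` on `Q ∖ T_Q`, and it factors
through `R`. Factoring works because both inclusions preserve precedence and reflect the event
order of `Q * R`: a path in the transitive closure of `⇢_Q ∪ ⇢_R` crosses between the two sides
only through the interface, where `g` identifies the two event orders. A cell lies in both
images exactly when it lives on the interface, i.e. comes from `□^U`. -/

open Function Set Relation

section CompEps

variable {A B : Type} {e : A → B}

@[simp]
lemma compEps_apply (he : Injective e) (ε : A → Tri) (ζ : B → Tri) (a : A) :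
    compEps e ε ζ (e a) = ε a := by
  have h : ∃ a', e a' = e a := ⟨a, rfl⟩
  rw [compEps, dif_pos h, he h.choose_spec]

lemma compEps_of_notMem_range {b : B} (hb : b ∉ range e) (ε : A → Tri) (ζ : B → Tri) :
    compEps e ε ζ b = ζ b :=
  dif_neg hb

lemma compEps_comp_self (he : Injective e) {κ ζ : B → Tri}
    (hκ : ∀ b ∉ range e, κ b = ζ b) : compEps e (κ ∘ e) ζ = κ := by
  funext b
  by_cases hb : b ∈ range e
  · obtain ⟨a, rfl⟩ := hb
    exact compEps_apply he _ _ a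
  · rw [compEps_of_notMem_range hb, hκ b hb]

lemma eq_and_eq_of_comp_eq_of_compEps_eq {V : Type} (he : Injective e) {h h' : V → A}
    {θ θ' : A → Tri} {ζ : B → Tri} (hmap : e ∘ h = e ∘ h')
    (heps : compEps e θ ζ = compEps e θ' ζ) : h = h' ∧ θ = θ' :=
  ⟨he.comp_left hmap, funext fun a => by simpa [he] using congrFun heps (e a)⟩

end CompEps

section IsIPHom

variable {L : Type} {V A B : PreIpomset L}

lemma IsIPHom.of_comp {e : A.car → B.car} (he : Injective e)
    (hlt : ∀ a b, A.lt a b → B.lt (e a) (e b)) (heo : ∀ a b, B.eo (e a) (e b) → A.eo a b)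
    {h : V.car → A.car} {κ : B.car → Tri} (hk : IsIPHom V B (e ∘ h) κ) :
    IsIPHom V A h (κ ∘ e) := by
  obtain ⟨hinj, hlt', heo', hex, hrel⟩ := hk
  refine ⟨hinj.of_comp, fun x y hxy => hlt' x y (hlt _ _ hxy),
    fun x y hpar hxy => heo _ _ (heo' x y hpar hxy), fun a => ?_,
    fun a b hab => hrel _ _ (hlt a b hab)⟩
  rw [comp_apply, hex, range_comp, he.mem_set_image]

lemma IsIPHom.exists_factor {e : A.car → B.car} (he : Injective e)
    (hlt : ∀ a b, A.lt a b → B.lt (e a) (e b)) (heo : ∀ a b, B.eo (e a) (e b) → A.eo a b)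
    {k : V.car → B.car} {κ ζ : B.car → Tri} (hk : IsIPHom V B k κ)
    (hκ : ∀ b ∉ range e, κ b = ζ b) (hζ : ∀ b ∉ range e, ζ b ≠ Tri.ex) :
    ∃ h θ, IsIPHom V A h θ ∧ k = e ∘ h ∧ κ = compEps e θ ζ := by
  have hrange : range k ⊆ range e := fun b hb => by
    by_contra hbe
    exact hζ b hbe (hκ b hbe ▸ (hk.2.2.2.1 b).2 hb)
  obtain ⟨h, rfl⟩ := range_subset_range_iff_exists_comp.1 hrange
  exact ⟨h, κ ∘ e, hk.of_comp he hlt heo, rfl, (compEps_comp_self he hκ).symm⟩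

lemma IsIPHom.eps_eq_one_of_lt (hV : IsDiscreteIpom V) {k : V.car → B.car} {κ : B.car → Tri}
    (hk : IsIPHom V B k κ) {x y : B.car} (hxy : B.lt x y) (hy : κ y ≠ Tri.zero) :
    κ x = Tri.one := by
  rcases hk.2.2.2.2 x y hxy with ⟨hx, -⟩ | ⟨-, hy'⟩ | ⟨hx, hy'⟩ | ⟨hx, -⟩ | ⟨hx, -⟩ | ⟨-, hy'⟩
  · exact hx
  · exact absurd hy' hy
  · obtain ⟨v, rfl⟩ := (hk.2.2.2.1 x).1 hx
    obtain ⟨v', rfl⟩ := (hk.2.2.2.1 y).1 hy'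
    exact absurd (hk.2.1 v v' hxy) (hV v v')
  · exact hx
  · exact hx
  · exact absurd hy' hy

end IsIPHom

section Glue

variable {L : Type} {Q R : PreIpomset L} (g : {x : Q.car // x ∈ Q.T} ≃ {y : R.car // y ∈ R.S})

lemma iotaQ_of_mem {r : R.car} (hr : r ∈ R.S) :
    iotaQ Q R g r = Sum.inl (g.symm ⟨r, hr⟩).1 :=
  dif_pos hr

lemma iotaQ_of_notMem {r : R.car} (hr : r ∉ R.S) : iotaQ Q R g r = Sum.inr ⟨r, hr⟩ :=
  dif_neg hr

@[simp]
lemma iotaQ_equiv (t : {x : Q.car // x ∈ Q.T}) : iotaQ Q R g (g t).1 = Sum.inl t.1 := by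
  simp [iotaQ_of_mem g (g t).2]

@[simp]
lemma iotaQ_val (a : {r : R.car // r ∉ R.S}) : iotaQ Q R g a.1 = Sum.inr a :=
  iotaQ_of_notMem g a.2

lemma exists_equiv_eq_or_notMem (r : R.car) : (∃ t, (g t).1 = r) ∨ r ∉ R.S := by
  by_cases hr : r ∈ R.S
  · exact Or.inl ⟨g.symm ⟨r, hr⟩, by simp⟩
  · exact Or.inr hr

lemma iotaQ_injective_s12 : Injective (iotaQ Q R g) := by
  intro r r' h
  rcases exists_equiv_eq_or_notMem g r with ⟨t, rfl⟩ | hr <;>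
    rcases exists_equiv_eq_or_notMem g r' with ⟨t', rfl⟩ | hr'
  · simp only [iotaQ_equiv, Sum.inl.injEq] at h
    rw [Subtype.ext h]
  · simp [iotaQ_of_notMem g hr'] at h
  · simp [iotaQ_of_notMem g hr] at h
  · simpa [iotaQ_of_notMem g hr, iotaQ_of_notMem g hr'] using h

lemma iotaQ_eq_inl_iff {r : R.car} {q : Q.car} :
    iotaQ Q R g r = Sum.inl q ↔ ∃ hr : r ∈ R.S, (g.symm ⟨r, hr⟩).1 = q := by
  by_cases hr : r ∈ R.S
  · simp [iotaQ_of_mem g hr, hr]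
  · simp [iotaQ_of_notMem g hr, hr]

lemma inl_mem_range_iotaQ {q : Q.car} : Sum.inl q ∈ range (iotaQ Q R g) ↔ q ∈ Q.T := by
  constructor
  · rintro ⟨r, hr⟩
    obtain ⟨hrS, rfl⟩ := (iotaQ_eq_inl_iff g).1 hr
    exact (g.symm ⟨r, hrS⟩).2
  · exact fun hq => ⟨_, iotaQ_equiv g ⟨q, hq⟩⟩

lemma iotaQ_comp_uInMap : iotaQ Q R g ∘ uInMap R = Sum.inl ∘ uFinMap Q R g :=
  funext fun u => iotaQ_of_mem g u.2

lemma glue_lt_inl {q q' : Q.car} (h : Q.lt q q') :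
    (glue Q R g).lt (Sum.inl q) (Sum.inl q') :=
  Or.inl ⟨q, q', rfl, rfl, h⟩

lemma glue_lt_iotaQ {r r' : R.car} (h : R.lt r r') :
    (glue Q R g).lt (iotaQ Q R g r) (iotaQ Q R g r') :=
  Or.inr (Or.inl ⟨r, r', rfl, rfl, h⟩)

lemma glue_lt_inl_inr {q : Q.car} (hq : q ∉ Q.T) (a : {r : R.car // r ∉ R.S}) :
    (glue Q R g).lt (Sum.inl q) (Sum.inr a) :=
  Or.inr (Or.inr ⟨q, a.1, rfl, (iotaQ_val g a).symm, hq, a.2⟩)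

end Glue

lemma Relation.rel_trans_reflGen {α : Type} {r : α → α → Prop} [IsTrans α r] {a b c : α}
    (hab : r a b) : ReflGen r b c → r a c
  | .refl => hab
  | .single hbc => _root_.trans hab hbc

lemma Relation.ReflGen.trans_rel {α : Type} {r : α → α → Prop} [IsTrans α r] {a b c : α} :
    ReflGen r a b → r b c → r a c
  | .refl, hbc => hbc
  | .single hab, hbc => _root_.trans hab hbc

section GlueEo

variable {L : Type} {Q R : PreIpomset L} (g : {x : Q.car // x ∈ Q.T} ≃ {y : R.car // y ∈ R.S})

/-- A transitive relation containing the generators of `(glue Q R g).eo`: a path between the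
two sides passes through the interface. -/
def GlueEo : Q.car ⊕ {r : R.car // r ∉ R.S} → Q.car ⊕ {r : R.car // r ∉ R.S} → Prop
  | .inl p, .inl p' => Q.eo p p'
  | .inr a, .inr b => R.eo a.1 b.1
  | .inl p, .inr b => ∃ t : {x : Q.car // x ∈ Q.T}, ReflGen Q.eo p t.1 ∧ R.eo (g t).1 b.1
  | .inr a, .inl p' => ∃ t : {x : Q.car // x ∈ Q.T}, R.eo a.1 (g t).1 ∧ ReflGen Q.eo t.1 p'

variable {g}

lemma reflGen_eo_equiv (hg : GlueOK Q R g) {t t' : {x : Q.car // x ∈ Q.T}}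
    (h : ReflGen Q.eo t.1 t'.1) :
    ReflGen R.eo (g t).1 (g t').1 := by
  obtain ⟨t, ht⟩ := t
  obtain ⟨t', ht'⟩ := t'
  rcases h with _ | h
  · exact .refl
  · exact .single ((hg.1 _ _).1 h)

lemma glueEo_iotaQ_iff [IsTrans R.car R.eo] (hg : GlueOK Q R g) {r r' : R.car} :
    GlueEo g (iotaQ Q R g r) (iotaQ Q R g r') ↔ R.eo r r' := by
  rcases exists_equiv_eq_or_notMem g r with ⟨t, rfl⟩ | hr <;>
    rcases exists_equiv_eq_or_notMem g r' with ⟨t', rfl⟩ | hr'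
  · rw [iotaQ_equiv, iotaQ_equiv]
    exact hg.1 t t'
  · rw [iotaQ_equiv, iotaQ_of_notMem g hr']
    exact ⟨fun ⟨s, hs, hb⟩ => (reflGen_eo_equiv hg hs).trans_rel hb, fun h => ⟨t, .refl, h⟩⟩
  · rw [iotaQ_of_notMem g hr, iotaQ_equiv]
    exact ⟨fun ⟨s, ha, hs⟩ => rel_trans_reflGen ha (reflGen_eo_equiv hg hs),
      fun h => ⟨t', h, .refl⟩⟩
  · rw [iotaQ_of_notMem g hr, iotaQ_of_notMem g hr']
    rfl

lemma glueEo_trans [IsTrans Q.car Q.eo] [IsTrans R.car R.eo] (hg : GlueOK Q R g) :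
    ∀ {x y z}, GlueEo g x y → GlueEo g y z → GlueEo g x z
  | .inl _, .inl _, .inl _, h₁, h₂ => trans_of Q.eo h₁ h₂
  | .inl _, .inl _, .inr _, h₁, ⟨t, ht, hc⟩ => ⟨t, .single (rel_trans_reflGen h₁ ht), hc⟩
  | .inl _, .inr _, .inl _, ⟨t, ht, hb⟩, ⟨t', hb', ht'⟩ =>
    ht.trans_rel (rel_trans_reflGen ((hg.1 t t').2 (trans_of R.eo hb hb')) ht')
  | .inl _, .inr _, .inr _, ⟨t, ht, hb⟩, h₂ => ⟨t, ht, trans_of R.eo hb h₂⟩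
  | .inr _, .inl _, .inl _, ⟨t, ha, ht⟩, h₂ => ⟨t, ha, .single (ht.trans_rel h₂)⟩
  | .inr _, .inl _, .inr _, ⟨_, ha, ht⟩, ⟨_, ht', hc⟩ =>
    trans_of R.eo (rel_trans_reflGen ha (reflGen_eo_equiv hg (trans_of (ReflGen Q.eo) ht ht'))) hc
  | .inr _, .inr _, .inl _, h₁, ⟨t, hb, ht⟩ => ⟨t, trans_of R.eo h₁ hb, ht⟩
  | .inr _, .inr _, .inr _, h₁, h₂ => trans_of R.eo h₁ h₂

lemma glueEo_of_glue_eo [IsTrans Q.car Q.eo] [IsTrans R.car R.eo] (hg : GlueOK Q R g)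
    {x y : (glue Q R g).car} (h : (glue Q R g).eo x y) : GlueEo g x y := by
  have base : ∀ {x y}, ((∃ a b, x = Sum.inl a ∧ y = Sum.inl b ∧ Q.eo a b) ∨
      (∃ a b, x = iotaQ Q R g a ∧ y = iotaQ Q R g b ∧ R.eo a b)) → GlueEo g x y := by
    rintro _ _ (⟨a, b, rfl, rfl, hab⟩ | ⟨a, b, rfl, rfl, hab⟩)
    · exact hab
    · exact (glueEo_iotaQ_iff hg).2 hab
  induction h with
  | single hxy => exact base hxy
  | tail _ hyz ih => exact glueEo_trans hg ih (base hyz)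

lemma eo_of_glue_eo_inl [IsTrans Q.car Q.eo] [IsTrans R.car R.eo] (hg : GlueOK Q R g)
    {q q' : Q.car} (h : (glue Q R g).eo (Sum.inl q) (Sum.inl q')) : Q.eo q q' :=
  glueEo_of_glue_eo hg h

lemma eo_of_glue_eo_iotaQ [IsTrans Q.car Q.eo] [IsTrans R.car R.eo] (hg : GlueOK Q R g)
    {r r' : R.car} (h : (glue Q R g).eo (iotaQ Q R g r) (iotaQ Q R g r')) : R.eo r r' :=
  (glueEo_iotaQ_iff hg).1 (glueEo_of_glue_eo hg h)

end GlueEo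

section GlueEps

variable {L : Type} {Q R : PreIpomset L} (g : {x : Q.car // x ∈ Q.T} ≃ {y : R.car // y ∈ R.S})

lemma fReps_of_notMem_range {x : (glue Q R g).car} (hx : x ∉ range (iotaQ Q R g)) :
    fReps Q R g x = Tri.one :=
  if_neg hx

@[simp]
lemma compEps_inl_inl (θ : Q.car → Tri) (q : Q.car) :
    compEps (Sum.inl : Q.car → (glue Q R g).car) θ (iQeps Q R g) (Sum.inl q) = θ q :=
  compEps_apply Sum.inl_injective θ _ q

@[simp]
lemma compEps_inl_inr (θ : Q.car → Tri) (a : {r : R.car // r ∉ R.S}) :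
    compEps (Sum.inl : Q.car → (glue Q R g).car) θ (iQeps Q R g) (Sum.inr a) = Tri.zero :=
  compEps_of_notMem_range (by simp) θ _

@[simp]
lemma compEps_iotaQ_inl_equiv (θ : R.car → Tri) (t : {x : Q.car // x ∈ Q.T}) :
    compEps (iotaQ Q R g) θ (fReps Q R g) (Sum.inl t.1) = θ (g t).1 := by
  rw [← iotaQ_equiv g t]
  exact compEps_apply (iotaQ_injective_s12 g) θ (fReps Q R g) _

lemma compEps_iotaQ_inl_of_notMem (θ : R.car → Tri) {q : Q.car} (hq : q ∉ Q.T) :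
    compEps (iotaQ Q R g) θ (fReps Q R g) (Sum.inl q) = Tri.one := by
  have hq' : Sum.inl q ∉ range (iotaQ Q R g) := (inl_mem_range_iotaQ g).not.2 hq
  exact (compEps_of_notMem_range hq' θ (fReps Q R g)).trans (fReps_of_notMem_range g hq')

@[simp]
lemma compEps_iotaQ_inr (θ : R.car → Tri) (a : {r : R.car // r ∉ R.S}) :
    compEps (iotaQ Q R g) θ (fReps Q R g) (Sum.inr a) = θ a.1 := by
  rw [← iotaQ_val g a]
  exact compEps_apply (iotaQ_injective_s12 g) θ (fReps Q R g) _

@[simp]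
lemma compEps_uFinMap_equiv (θ : (interfaceOb R).car → Tri) (t : {x : Q.car // x ∈ Q.T}) :
    compEps (uFinMap Q R g) θ (uFinEps Q) t.1 = θ (g t) := by
  have ht : uFinMap Q R g (g t) = t.1 := by simp [uFinMap]
  rw [← ht]
  have hinj : Injective (uFinMap Q R g) := Subtype.val_injective.comp g.symm.injective
  exact compEps_apply hinj _ _ _

lemma compEps_uFinMap_of_notMem (θ : (interfaceOb R).car → Tri) {q : Q.car} (hq : q ∉ Q.T) :
    compEps (uFinMap Q R g) θ (uFinEps Q) q = Tri.one := by
  have hq' : q ∉ range (uFinMap Q R g) := by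
    rintro ⟨u, rfl⟩
    exact hq (g.symm u).2
  rw [compEps_of_notMem_range hq', uFinEps, if_neg hq]

@[simp]
lemma compEps_uInMap_val (θ : (interfaceOb R).car → Tri) (u : (interfaceOb R).car) :
    compEps (uInMap R) θ (uInEps R) u.1 = θ u :=
  compEps_apply Subtype.val_injective θ _ u

lemma uInEps_of_notMem {r : R.car} (hr : r ∉ R.S) : uInEps R r = Tri.zero :=
  if_neg hr

lemma compEps_uInMap_of_notMem (θ : (interfaceOb R).car → Tri) {r : R.car} (hr : r ∉ R.S) :
    compEps (uInMap R) θ (uInEps R) r = Tri.zero := by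
  have hr' : r ∉ range (uInMap R) := by
    rintro ⟨u, rfl⟩
    exact hr u.2
  rw [compEps_of_notMem_range hr', uInEps_of_notMem hr]

lemma compEps_inl_eq_compEps_iotaQ_iff {θq : Q.car → Tri} {θr : R.car → Tri} :
    compEps (Sum.inl : Q.car → (glue Q R g).car) θq (iQeps Q R g)
        = compEps (iotaQ Q R g) θr (fReps Q R g) ↔
      (∀ t, θq t.1 = θr (g t).1) ∧ (∀ q ∉ Q.T, θq q = Tri.one) ∧
        (∀ r ∉ R.S, θr r = Tri.zero) := by
  constructor
  · intro h
    refine ⟨fun t => ?_, fun q hq => ?_, fun r hr => ?_⟩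
    · simpa using congrFun h (Sum.inl t.1)
    · simpa [compEps_iotaQ_inl_of_notMem g _ hq] using congrFun h (Sum.inl q)
    · simpa using (congrFun h (Sum.inr ⟨r, hr⟩)).symm
  · rintro ⟨hT, hnT, hnS⟩
    funext x
    rcases x with q | a
    · by_cases hq : q ∈ Q.T
      · obtain ⟨t, rfl⟩ : ∃ t : {x : Q.car // x ∈ Q.T}, t.1 = q := ⟨⟨q, hq⟩, rfl⟩
        simpa using hT t
      · simp [compEps_iotaQ_inl_of_notMem g _ hq, hnT q hq]
    · simp [hnS a.1 a.2]

lemma compEps_uFinMap_inl_eq_compEps_uInMap_iotaQ (θ : (interfaceOb R).car → Tri) :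
    compEps (Sum.inl : Q.car → (glue Q R g).car) (compEps (uFinMap Q R g) θ (uFinEps Q))
        (iQeps Q R g)
      = compEps (iotaQ Q R g) (compEps (uInMap R) θ (uInEps R)) (fReps Q R g) :=
  (compEps_inl_eq_compEps_iotaQ_iff g).2
    ⟨fun t => by rw [compEps_uFinMap_equiv]; exact (compEps_uInMap_val θ (g t)).symm,
    fun _ hq => compEps_uFinMap_of_notMem g θ hq, fun _ hr => compEps_uInMap_of_notMem θ hr⟩

lemma exists_interface_of_compEps_inl_eq_compEps_iotaQ {V : PreIpomset L}
    {hq : V.car → Q.car} {θq : Q.car → Tri} {hr : V.car → R.car} {θr : R.car → Tri}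
    (hhr : IsIPHom V R hr θr)
    (hmap : (Sum.inl ∘ hq : V.car → (glue Q R g).car) = iotaQ Q R g ∘ hr)
    (heps : compEps (Sum.inl : Q.car → (glue Q R g).car) θq (iQeps Q R g)
        = compEps (iotaQ Q R g) θr (fReps Q R g)) :
    ∃ h0 θ0, IsIPHom V (interfaceOb R) h0 θ0 ∧
      hq = uFinMap Q R g ∘ h0 ∧ θq = compEps (uFinMap Q R g) θ0 (uFinEps Q) ∧
      hr = uInMap R ∘ h0 ∧ θr = compEps (uInMap R) θ0 (uInEps R) := by
  choose hS hhq using fun v => (iotaQ_eq_inl_iff g).1 (congrFun hmap v).symm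
  obtain ⟨hT, hnT, hnS⟩ := (compEps_inl_eq_compEps_iotaQ_iff g).1 heps
  let h0 : V.car → (interfaceOb R).car := fun v => ⟨hr v, hS v⟩
  refine ⟨h0, θr ∘ uInMap R,
    IsIPHom.of_comp (e := uInMap R) Subtype.val_injective (fun _ _ h => h.elim) (fun _ _ h => h)
      hhr,
    funext fun v => (hhq v).symm, funext fun q => ?_, rfl,
    (compEps_comp_self Subtype.val_injective fun r hr => ?_).symm⟩
  · by_cases hqT : q ∈ Q.T
    · obtain ⟨t, rfl⟩ : ∃ t : {x : Q.car // x ∈ Q.T}, t.1 = q := ⟨⟨q, hqT⟩, rfl⟩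
      rw [compEps_uFinMap_equiv]
      exact hT t
    · rw [hnT q hqT, compEps_uFinMap_of_notMem g _ hqT]
  · have hrS : r ∉ R.S := fun hrS => hr ⟨⟨r, hrS⟩, rfl⟩
    rw [hnS r hrS, uInEps_of_notMem hrS]

lemma IsIPHom.factors_through_glue [IsTrans Q.car Q.eo] [IsTrans R.car R.eo]
    (hg : GlueOK Q R g) {V : PreIpomset L} (hV : IsDiscreteIpom V) {k : V.car → (glue Q R g).car}
    {κ : (glue Q R g).car → Tri} (hk : IsIPHom V (glue Q R g) k κ) :
    (∃ h θ, IsIPHom V Q h θ ∧ k = Sum.inl ∘ h ∧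
        κ = compEps (Sum.inl : Q.car → (glue Q R g).car) θ (iQeps Q R g)) ∨
      (∃ h θ, IsIPHom V R h θ ∧ k = iotaQ Q R g ∘ h ∧
        κ = compEps (iotaQ Q R g) θ (fReps Q R g)) := by
  by_cases hstarted : ∃ a, κ (Sum.inr a) ≠ Tri.zero
  · obtain ⟨a, ha⟩ := hstarted
    refine .inr (hk.exists_factor (iotaQ_injective_s12 g) (fun _ _ => glue_lt_iotaQ g)
      (fun _ _ => eo_of_glue_eo_iotaQ hg) ?_ fun b hb => ?_)
    · rintro (q | b) hb
      · rw [fReps_of_notMem_range g hb]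
        exact hk.eps_eq_one_of_lt hV
          (glue_lt_inl_inr g ((inl_mem_range_iotaQ g).not.1 hb) a) ha
      · exact absurd ⟨b.1, iotaQ_val g b⟩ hb
    · rw [fReps_of_notMem_range g hb]
      nofun
  · simp only [not_exists, not_not] at hstarted
    refine .inl (hk.exists_factor Sum.inl_injective (fun _ _ => glue_lt_inl g)
      (fun _ _ => eo_of_glue_eo_inl hg) ?_ ?_) <;> rintro (q | a) hb
    · exact absurd ⟨q, rfl⟩ hb
    · exact hstarted a
    · exact absurd ⟨q, rfl⟩ hb
    · nofun

end GlueEps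

theorem track_of_glue_is_pushout_general {L : Type} (Q R : PreIpomset L)
    (hQ : IsIpomset Q) (hR : IsIpomset R)
    (g : {x : Q.car // x ∈ Q.T} ≃ {y : R.car // y ∈ R.S})
    (hg : GlueOK Q R g) :
    TrackGluePushout Q R g := by
  have : IsTrans Q.car Q.eo := ⟨hQ.2.2.2.2.1⟩
  have : IsTrans R.car R.eo := ⟨hR.2.2.2.2.1⟩
  intro V _ hV
  refine ⟨fun h θ _ => ⟨?_, compEps_uFinMap_inl_eq_compEps_uInMap_iotaQ g θ⟩,
    fun _ _ hk => hk.factors_through_glue g hg hV,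
    fun _ _ _ _ _ _ => eq_and_eq_of_comp_eq_of_compEps_eq Sum.inl_injective,
    fun _ _ _ _ _ _ => eq_and_eq_of_comp_eq_of_compEps_eq (iotaQ_injective_s12 g),
    fun _ _ _ _ _ hhr => exists_interface_of_compEps_inl_eq_compEps_iotaQ g hhr⟩
  exact congrArg (· ∘ h) (iotaQ_comp_uInMap g).symm

/-- If `Q` and `R` are composable interval ipomsets, then the
track object of their gluing is the gluing (pushout) of their track objects:
`□^{Q*R} = □^Q * □^R`, the colimit of `□^R ← □^U → □^Q` along the initial
inclusion of `□^U` into `□^R` and the final inclusion of `□^U` into `□^Q`,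
where `U ≅ T_Q ≅ S_R` is the interface conclist. -/
theorem track_of_glue_is_pushout {L : Type} (Q R : PreIpomset L)
    (hQ : IsIpomset Q) (hR : IsIpomset R)
    (hQi : IsInterval Q) (hRi : IsInterval R)
    (g : {x : Q.car // x ∈ Q.T} ≃ {y : R.car // y ∈ R.S})
    (hg : GlueOK Q R g) :
    TrackGluePushout Q R g :=
  track_of_glue_is_pushout_general Q R hQ hR g hg
end
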